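/- arXiv:2110.10535 — 3 statements merged into one kernel-verified Lean document; each statement's English description precedes it below -/
import Mathlib

section
/- Let TS=(S,T,→,s₀) be a CEST-system and r a home state of TS, and let TS̄_r be the restriction of the reversed system TS̄=(S,T̄,{(s',ᾱ,s) : s –α→ s'}) to the states from which r is reachable in TS, with initial state r. Then TS^mixrev is solvable if and only if both TS and TS̄_r are solvable. -/
/-! Common formalization of step transition systems, CEST-systems,
reversing constructions, PT-nets, and solvability. -/

structure STS (S : Type*) (A : Type*) where
  T : Finset A
  tr : S → Multiset A → S → Prop
  init : S

namespace STS

variable {S S' : Type*} {A : Type*}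

/-- All transition labels are multisets over the action set `T`. -/
def LabelsIn (X : STS S A) : Prop :=
  ∀ s (α : Multiset A) s', X.tr s α s' → ∀ a ∈ α, a ∈ X.T

/-- The integer action vector of a step. -/
def stepVec [DecidableEq A] (α : Multiset A) : A → ℤ :=
  fun a => (α.count a : ℤ)

/-- `PathSig X s r v` holds iff there is an undirected path from `s` to `r`
with signature `v`. -/
inductive PathSig [DecidableEq A] (X : STS S A) : S → S → (A → ℤ) → Prop
  | nil (s : S) : PathSig X s s 0
  | fwd {s r r' : S} {α : Multiset A} {v : A → ℤ} :
      PathSig X s r v → X.tr r α r' → PathSig X s r' (v + stepVec α)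
  | bwd {s r r' : S} {α : Multiset A} {v : A → ℤ} :
      PathSig X s r v → X.tr r' α r → PathSig X s r' (v - stepVec α)

/-- The least addition-closed equivalence relating signatures of any two
undirected paths with the same source and target. -/
inductive Bowtie [DecidableEq A] (X : STS S A) : (A → ℤ) → (A → ℤ) → Prop
  | base {s r : S} {v w : A → ℤ} :
      PathSig X s r v → PathSig X s r w → Bowtie X v w
  | refl (v : A → ℤ) : Bowtie X v v
  | symm {v w : A → ℤ} : Bowtie X v w → Bowtie X w v
  | trans {u v w : A → ℤ} : Bowtie X u v → Bowtie X v w → Bowtie X u w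
  | add {v w v' w' : A → ℤ} :
      Bowtie X v w → Bowtie X v' w' → Bowtie X (v + v') (w + w')

/-- Constant effect. -/
def CE [DecidableEq A] (X : STS S A) : Prop :=
  ∀ (s r r' : S) (v w : A → ℤ),
    PathSig X s r v → PathSig X s r' w → Bowtie X v w → r = r'

/-- Reachability by forward transitions. -/
inductive ReachFrom (X : STS S A) : S → S → Prop
  | refl (s : S) : ReachFrom X s s
  | step {s r r' : S} {α : Multiset A} :
      ReachFrom X s r → X.tr r α r' → ReachFrom X s r'

/-- Every state is reachable from the initial state. -/
def REA (X : STS S A) : Prop := ∀ s, X.ReachFrom X.init s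

/-- Empty loops. -/
def EL (X : STS S A) : Prop := ∀ s, X.tr s 0 s

/-- Sequentialisability. -/
def SEQ (X : STS S A) : Prop :=
  ∀ (s : S) (α β : Multiset A), (∃ s', X.tr s (α + β) s') →
    ∃ s', X.tr s α s' ∧ ∃ s'', X.tr s' β s''

/-- A CEST-system: a step transition system satisfying CE, REA, EL and SEQ. -/
def IsCEST [DecidableEq A] (X : STS S A) : Prop :=
  X.LabelsIn ∧ X.CE ∧ X.REA ∧ X.EL ∧ X.SEQ

/-- Step-finiteness: at every state only finitely many steps are enabled. -/
def StepFinite (X : STS S A) : Prop :=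
  ∀ s, {α : Multiset A | ∃ s', X.tr s α s'}.Finite

/-- Retain only transitions whose label has size at most 1. -/
def seqR (X : STS S A) : STS S A :=
  { X with tr := fun s α s' => X.tr s α s' ∧ Multiset.card α ≤ 1 }

/-- Retain only transitions whose label is a set. -/
def setR (X : STS S A) : STS S A :=
  { X with tr := fun s α s' => X.tr s α s' ∧ α.Nodup }

/-- Retain only transitions whose label has support of size at most 1. -/
def spikeR [DecidableEq A] (X : STS S A) : STS S A :=
  { X with tr := fun s α s' => X.tr s α s' ∧ α.toFinset.card ≤ 1 }

variable [DecidableEq A]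

/-- `bar` is a proper reversing map for the actions of `X`: reverses are
pairwise distinct and fresh. -/
def GoodRev (X : STS S A) (bar : A → A) : Prop :=
  Set.InjOn bar ↑X.T ∧ ∀ a ∈ X.T, bar a ∉ X.T

/-- The action set `T ⊎ T̄`. -/
def revT (X : STS S A) (bar : A → A) : Finset A := X.T ∪ X.T.image bar

/-- The direct reverse `TS^rev` (in a CEST-system, `s –α→ s'` means `s' = s⊕α`). -/
def revSTS (X : STS S A) (bar : A → A) : STS S A where
  T := revT X bar
  tr s γ s' := X.tr s γ s' ∨ ∃ α : Multiset A, γ = Multiset.map bar α ∧ X.tr s' α s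
  init := X.init

/-- The set reverse `TS^setrev`. -/
def setrevSTS (X : STS S A) (bar : A → A) : STS S A where
  T := revT X bar
  tr s γ s' := X.tr s γ s' ∨
    ∃ α : Multiset A, γ = Multiset.map bar α ∧ α.Nodup ∧ X.tr s' α s
  init := X.init

/-- The mixed reverse `TS^mixrev`: transitions `(s⊕α, ᾱ+β, s⊕β)` for `s –(α+β)→`. -/
def mixrevSTS (X : STS S A) (bar : A → A) : STS S A where
  T := revT X bar
  tr u γ v := ∃ (s : S) (α β : Multiset A),
      γ = Multiset.map bar α + β ∧ (∃ w, X.tr s (α + β) w) ∧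
      X.tr s α u ∧ X.tr s β v
  init := X.init

/-- `Y` is a split reverse of `X` (w.r.t. reversing map `bar` and the
index-removing map `noidx`). -/
def IsSplitRev (X : STS S A) (bar noidx : A → A) (Y : STS S A) : Prop :=
  Y.init = X.init ∧
  Y.LabelsIn ∧
  X.T ⊆ Y.T ∧
  (∀ a ∈ X.T, noidx a = a) ∧
  Disjoint X.T ((Y.T \ X.T).image noidx) ∧
  Y.SEQ ∧
  Y.T.image noidx = revT X bar ∧
  ∀ (s : S) (γ : Multiset A) (s' : S),
    (∃ δ : Multiset A, Y.tr s δ s' ∧ γ = Multiset.map noidx δ) ↔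
      (revSTS X bar).tr s γ s'

/-- Inclusion with the identity map on states (`⊴`). -/
def SubId (X Y : STS S A) : Prop :=
  X.init = Y.init ∧ X.T ⊆ Y.T ∧
  ∀ s (α : Multiset A) s', X.tr s α s' → Y.tr s α s'

/-- Inclusion (`◁`) via a bijection of states. -/
def Incl (X : STS S A) (Y : STS S' A) : Prop :=
  ∃ ψ : S ≃ S', ψ X.init = Y.init ∧ X.T ⊆ Y.T ∧
    ∀ s (α : Multiset A) s', X.tr s α s' → Y.tr (ψ s) α (ψ s')

/-- Isomorphism of step transition systems. -/
def IsoSTS (X : STS S A) (Y : STS S' A) : Prop :=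
  ∃ ψ : S ≃ S', ψ X.init = Y.init ∧ X.T = Y.T ∧
    ∀ s (α : Multiset A) s', X.tr s α s' ↔ Y.tr (ψ s) α (ψ s')

/-- `TS̄_r`: the reversed system restricted to the states from which `r` is
reachable in `X`, with initial state `r`. -/
def revRestrict (X : STS S A) (bar : A → A) (r : S) :
    STS {s : S // X.ReachFrom s r} A where
  T := X.T.image bar
  tr u γ v := ∃ α : Multiset A, γ = Multiset.map bar α ∧ X.tr v.1 α u.1
  init := ⟨r, ReachFrom.refl r⟩

end STS

/-- A place/transition net. -/
structure PTNet (P : Type*) (A : Type*) where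
  T : Finset A
  pre : P → A → ℕ
  post : A → P → ℕ
  M0 : P → ℕ
  pre_pos : ∀ a ∈ T, ∃ p, 0 < pre p a

namespace PTNet

variable {P A : Type*}

def PRE (N : PTNet P A) (α : Multiset A) (p : P) : ℕ :=
  (α.map fun a => N.pre p a).sum

def POST (N : PTNet P A) (α : Multiset A) (p : P) : ℕ :=
  (α.map fun a => N.post a p).sum

def Enabled (N : PTNet P A) (M : P → ℕ) (α : Multiset A) : Prop :=
  (∀ a ∈ α, a ∈ N.T) ∧ ∀ p, N.PRE α p ≤ M p

def fire (N : PTNet P A) (M : P → ℕ) (α : Multiset A) : P → ℕ :=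
  fun p => M p - N.PRE α p + N.POST α p

inductive Reach (N : PTNet P A) : (P → ℕ) → Prop
  | init : Reach N N.M0
  | step {M : P → ℕ} {α : Multiset A} :
      Reach N M → N.Enabled M α → Reach N (N.fire M α)

/-- The subnet induced by a set of actions (same places, same marking). -/
def restrict [DecidableEq A] (N : PTNet P A) (T' : Finset A) : PTNet P A where
  T := N.T ∩ T'
  pre := N.pre
  post := N.post
  M0 := N.M0
  pre_pos := fun a ha => N.pre_pos a (Finset.mem_of_mem_inter_left ha)

end PTNet

/-- The concurrent reachability graph of a PT-net. -/
def CRG {P A : Type*} (N : PTNet P A) : STS {M : P → ℕ // N.Reach M} A where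
  T := N.T
  tr M α M' := N.Enabled M.1 α ∧ M'.1 = N.fire M.1 α
  init := ⟨N.M0, PTNet.Reach.init⟩

/-- A step transition system is solvable if it is isomorphic to the
concurrent reachability graph of some PT-net. -/
def STSSolvable {S A : Type*} (X : STS S A) : Prop :=
  ∃ (n : ℕ) (N : PTNet (Fin n) A), STS.IsoSTS X (CRG N)

/-- An unmarked PT-net. -/
structure UPTNet (P : Type*) (A : Type*) where
  T : Finset A
  pre : P → A → ℕ
  post : A → P → ℕ
  pre_pos : ∀ a ∈ T, ∃ p, 0 < pre p a

def UPTNet.withM {P A : Type*} (U : UPTNet P A) (M : P → ℕ) : PTNet P A :=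
  ⟨U.T, U.pre, U.post, M, U.pre_pos⟩

/-- Solvability of the reversed system `TS̄` with multiple initial states `R`:
one unmarked PT-net and one map `ψ` solving each `TS̄_r` via `ψ(r)` as the
initial marking. -/
def RevMultiSolvable {S A : Type*} [DecidableEq A] (X : STS S A) (bar : A → A)
    (R : Set S) : Prop :=
  ∃ (n : ℕ) (U : UPTNet (Fin n) A) (ψ : S → Fin n → ℕ),
    ∀ r ∈ R,
      ∃ e : {s : S // X.ReachFrom s r} ≃
              {M : Fin n → ℕ // (U.withM (ψ r)).Reach M},
        (∀ s, (e s).1 = ψ s.1) ∧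
        (X.revRestrict bar r).T = (CRG (U.withM (ψ r))).T ∧
        ∀ s (α : Multiset A) s',
          (X.revRestrict bar r).tr s α s' ↔ (CRG (U.withM (ψ r))).tr (e s) α (e s')

/-- A PT-net with weighted read arcs. -/
structure PTRNet (P : Type*) (A : Type*) where
  T : Finset A
  pre : P → A → ℕ
  post : A → P → ℕ
  read : P → A → Option ℕ
  M0 : P → ℕ
  pre_pos : ∀ a ∈ T, ∃ p, 0 < pre p a

namespace PTRNet

variable {P A : Type*}

def toPTNet (N : PTRNet P A) : PTNet P A := ⟨N.T, N.pre, N.post, N.M0, N.pre_pos⟩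

def Enabled (N : PTRNet P A) (M : P → ℕ) (α : Multiset A) : Prop :=
  N.toPTNet.Enabled M α ∧ ∀ a ∈ α, ∀ p k, N.read p a = some k → M p = k

inductive Reach (N : PTRNet P A) : (P → ℕ) → Prop
  | init : Reach N N.M0
  | step {M : P → ℕ} {α : Multiset A} :
      Reach N M → N.Enabled M α → Reach N (N.toPTNet.fire M α)

end PTRNet

/-- The concurrent reachability graph of a PTR-net. -/
def PTRCRG {P A : Type*} (N : PTRNet P A) : STS {M : P → ℕ // N.Reach M} A where
  T := N.T
  tr M α M' := N.Enabled M.1 α ∧ M'.1 = N.toPTNet.fire M.1 α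
  init := ⟨N.M0, PTRNet.Reach.init⟩

section AuxLemmas

open STS

variable {S A : Type*} [DecidableEq A]

namespace PTNet

variable {P : Type*} (N : PTNet P A)

lemma PRE_add' (α β : Multiset A) (p : P) :
    N.PRE (α + β) p = N.PRE α p + N.PRE β p := by
  simp [PTNet.PRE]

lemma POST_add' (α β : Multiset A) (p : P) :
    N.POST (α + β) p = N.POST α p + N.POST β p := by
  simp [PTNet.POST]

end PTNet

namespace STS

lemma det_of_CE {X : STS S A} (hCE : X.CE) {s u u' : S} {α : Multiset A}
    (h1 : X.tr s α u) (h2 : X.tr s α u') : u = u' :=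
  hCE s u u' _ _ ((PathSig.nil s).fwd h1) ((PathSig.nil s).fwd h2) (Bowtie.refl _)

lemma ReachFrom.trans' {X : STS S A} {a b c : S} (h1 : X.ReachFrom a b)
    (h2 : X.ReachFrom b c) : X.ReachFrom a c := by
  induction h2 with
  | refl => exact h1
  | step h ht ih => exact ih.step ht

variable {X : STS S A} {bar : A → A}

lemma mix_of_fwd (hEL : X.EL) {u v : S} {β : Multiset A} (h : X.tr u β v) :
    (X.mixrevSTS bar).tr u β v :=
  ⟨u, 0, β, by simp, ⟨v, by simpa using h⟩, hEL u, h⟩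

lemma mix_of_bwd (hEL : X.EL) {u v : S} {α : Multiset A} (h : X.tr v α u) :
    (X.mixrevSTS bar).tr u (Multiset.map bar α) v :=
  ⟨v, α, 0, by simp, ⟨u, by simpa using h⟩, h, hEL v⟩

lemma mix_pure (hX : X.IsCEST) (hg : X.GoodRev bar) {u v : S} {γ : Multiset A}
    (h : (X.mixrevSTS bar).tr u γ v) (hγ : ∀ b ∈ γ, b ∈ X.T) : X.tr u γ v := by
  obtain ⟨s, α, β, rfl, -, hα, hβ⟩ := h
  have hα0 : α = 0 := by
    by_contra hne
    obtain ⟨a, ha⟩ := Multiset.exists_mem_of_ne_zero hne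
    have haT : a ∈ X.T := hX.1 _ _ _ hα a ha
    exact hg.2 a haT
      (hγ _ (Multiset.mem_add.2 (Or.inl (Multiset.mem_map_of_mem bar ha))))
  subst hα0
  have hsu : s = u := det_of_CE hX.2.1 (hX.2.2.2.1 s) hα
  subst hsu
  simpa using hβ

lemma mix_rev (hX : X.IsCEST) (hg : X.GoodRev bar) {u v : S} {γ : Multiset A}
    (h : (X.mixrevSTS bar).tr u γ v) (hγ : ∀ b ∈ γ, b ∈ X.T.image bar) :
    ∃ α : Multiset A, γ = Multiset.map bar α ∧ (∀ a ∈ α, a ∈ X.T) ∧ X.tr v α u := by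
  obtain ⟨s, α, β, rfl, -, hα, hβ⟩ := h
  have hβ0 : β = 0 := by
    by_contra hne
    obtain ⟨b, hb⟩ := Multiset.exists_mem_of_ne_zero hne
    have hbT : b ∈ X.T := hX.1 _ _ _ hβ b hb
    have hmem : b ∈ X.T.image bar := hγ _ (Multiset.mem_add.2 (Or.inr hb))
    obtain ⟨a, haT, rfl⟩ := Finset.mem_image.1 hmem
    exact hg.2 a haT hbT
  subst hβ0
  have hsv : s = v := det_of_CE hX.2.1 (hX.2.2.2.1 s) hβ
  subst hsv
  exact ⟨α, by simp, fun a ha => hX.1 _ _ _ hα a ha, by simpa using hα⟩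

lemma seq_right (hSEQ : X.SEQ) {s w : S} {α β : Multiset A}
    (h : X.tr s (α + β) w) : ∃ v, X.tr s β v := by
  obtain ⟨v, hv, -⟩ := hSEQ s β α ⟨w, by rwa [add_comm β α]⟩
  exact ⟨v, hv⟩

end STS

end AuxLemmas
section Transport

variable {S A P : Type*}

lemma solvable_transport [Fintype P] {X : STS S A} {N : PTNet P A}
    (h : STS.IsoSTS X (CRG N)) : STSSolvable X := by
  classical
  obtain ⟨ψ, hinit, hT, htr⟩ := h
  set n := Fintype.card P with hn
  let g : P ≃ Fin n := Fintype.equivFin P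
  let N' : PTNet (Fin n) A :=
    { T := N.T
      pre := fun p a => N.pre (g.symm p) a
      post := fun a p => N.post a (g.symm p)
      M0 := fun p => N.M0 (g.symm p)
      pre_pos := fun a ha => by
        obtain ⟨p, hp⟩ := N.pre_pos a ha
        exact ⟨g p, by simpa using hp⟩ }
  have hPRE : ∀ (α : Multiset A) (p : Fin n), N'.PRE α p = N.PRE α (g.symm p) :=
    fun α p => rfl
  have hPOST : ∀ (α : Multiset A) (p : Fin n), N'.POST α p = N.POST α (g.symm p) :=
    fun α p => rfl
  have hen : ∀ (M : P → ℕ) (α : Multiset A),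
      N'.Enabled (fun p => M (g.symm p)) α ↔ N.Enabled M α := by
    intro M α
    constructor
    · rintro ⟨h1, h2⟩
      refine ⟨h1, fun q => ?_⟩
      have := h2 (g q)
      simpa [hPRE] using this
    · rintro ⟨h1, h2⟩
      exact ⟨h1, fun p => h2 (g.symm p)⟩
  have hfire : ∀ (M : P → ℕ) (α : Multiset A),
      N'.fire (fun p => M (g.symm p)) α = fun p => N.fire M α (g.symm p) :=
    fun M α => rfl
  have hreach1 : ∀ M, N.Reach M → N'.Reach (fun p => M (g.symm p)) := by
    intro M h
    induction h with
    | init => exact PTNet.Reach.init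
    | step hM hEn ih =>
      exact hfire _ _ ▸ PTNet.Reach.step ih ((hen _ _).2 hEn)
  have hreach2 : ∀ M', N'.Reach M' → ∃ M, N.Reach M ∧ M' = fun p => M (g.symm p) := by
    intro M' h
    induction h with
    | init => exact ⟨N.M0, PTNet.Reach.init, rfl⟩
    | step hM hEn ih =>
      obtain ⟨M, hM1, rfl⟩ := ih
      exact ⟨N.fire M _, PTNet.Reach.step hM1 ((hen _ _).1 hEn), hfire _ _⟩
  have hminj : ∀ (M M' : P → ℕ),
      (fun p => M (g.symm p)) = (fun p => M' (g.symm p)) → M = M' := by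
    intro M M' h
    funext q
    have := congrFun h (g q)
    simpa using this
  let e2 : {M : P → ℕ // N.Reach M} ≃ {M' : Fin n → ℕ // N'.Reach M'} :=
    Equiv.ofBijective (fun M => ⟨fun p => M.1 (g.symm p), hreach1 _ M.2⟩)
      ⟨fun a b h => Subtype.ext (hminj _ _ (congrArg Subtype.val h)),
       fun M' => by
        obtain ⟨M, hM, hEq⟩ := hreach2 M'.1 M'.2
        exact ⟨⟨M, hM⟩, Subtype.ext hEq.symm⟩⟩
  refine ⟨n, N', ψ.trans e2, ?_, hT, ?_⟩
  · apply Subtype.ext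
    show (fun p => (ψ X.init).1 (g.symm p)) = N'.M0
    rw [hinit]
    rfl
  · intro s α s'
    rw [htr s α s']
    show (CRG N).tr (ψ s) α (ψ s') ↔ (CRG N').tr (e2 (ψ s)) α (e2 (ψ s'))
    constructor
    · rintro ⟨h1, h2⟩
      refine ⟨(hen _ _).2 h1, ?_⟩
      show (fun p => (ψ s').1 (g.symm p)) = N'.fire (fun p => (ψ s).1 (g.symm p)) α
      rw [hfire, h2]
    · rintro ⟨h1, h2⟩
      exact ⟨(hen _ _).1 h1, hminj _ _ (h2.trans (hfire _ _))⟩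

end Transport
section Comb

set_option linter.unusedSectionVars false

variable {A : Type*} [DecidableEq A] {n m : ℕ}

def cpre (T' : Finset A) (bar binv : A → A) (Nf : PTNet (Fin n) A)
    (Nr : PTNet (Fin m) A) : Fin n ⊕ Fin m → A → ℕ :=
  Sum.elim (fun p a => if a ∈ T' then Nf.pre p a else Nf.post (binv a) p)
           (fun q a => if a ∈ T' then Nr.post (bar a) q else Nr.pre q a)

def cpost (T' : Finset A) (bar binv : A → A) (Nf : PTNet (Fin n) A)
    (Nr : PTNet (Fin m) A) : A → Fin n ⊕ Fin m → ℕ :=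
  fun a => Sum.elim (fun p => if a ∈ T' then Nf.post a p else Nf.pre p (binv a))
                    (fun q => if a ∈ T' then Nr.pre q (bar a) else Nr.post a q)

def combNet (T' : Finset A) (bar binv : A → A) (Nf : PTNet (Fin n) A)
    (Nr : PTNet (Fin m) A) (M0 : Fin n ⊕ Fin m → ℕ)
    (hpos : ∀ a ∈ T' ∪ T'.image bar, ∃ p, 0 < cpre T' bar binv Nf Nr p a) :
    PTNet (Fin n ⊕ Fin m) A where
  T := T' ∪ T'.image bar
  pre := cpre T' bar binv Nf Nr
  post := cpost T' bar binv Nf Nr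
  M0 := M0
  pre_pos := hpos

variable (T' : Finset A) (bar binv : A → A) (Nf : PTNet (Fin n) A)
    (Nr : PTNet (Fin m) A) (M0 : Fin n ⊕ Fin m → ℕ)
    (hpos : ∀ a ∈ T' ∪ T'.image bar, ∃ p, 0 < cpre T' bar binv Nf Nr p a)

lemma combNet_PRE_inl {α β : Multiset A}
    (hbar : ∀ a ∈ T', bar a ∉ T') (hbinv : ∀ a ∈ T', binv (bar a) = a)
    (hα : ∀ a ∈ α, a ∈ T') (hβ : ∀ b ∈ β, b ∈ T') (p : Fin n) :
    (combNet T' bar binv Nf Nr M0 hpos).PRE (Multiset.map bar α + β) (Sum.inl p)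
      = Nf.POST α p + Nf.PRE β p := by
  show ((Multiset.map bar α + β).map fun a => cpre T' bar binv Nf Nr (Sum.inl p) a).sum
      = Nf.POST α p + Nf.PRE β p
  rw [Multiset.map_add, Multiset.sum_add, Multiset.map_map]
  congr 1
  · refine congrArg Multiset.sum (Multiset.map_congr rfl ?_)
    intro a ha
    simp [cpre, hbar a (hα a ha), hbinv a (hα a ha)]
  · refine congrArg Multiset.sum (Multiset.map_congr rfl ?_)
    intro b hb
    simp [cpre, hβ b hb]

lemma combNet_POST_inl {α β : Multiset A}
    (hbar : ∀ a ∈ T', bar a ∉ T') (hbinv : ∀ a ∈ T', binv (bar a) = a)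
    (hα : ∀ a ∈ α, a ∈ T') (hβ : ∀ b ∈ β, b ∈ T') (p : Fin n) :
    (combNet T' bar binv Nf Nr M0 hpos).POST (Multiset.map bar α + β) (Sum.inl p)
      = Nf.PRE α p + Nf.POST β p := by
  show ((Multiset.map bar α + β).map fun a => cpost T' bar binv Nf Nr a (Sum.inl p)).sum
      = Nf.PRE α p + Nf.POST β p
  rw [Multiset.map_add, Multiset.sum_add, Multiset.map_map]
  congr 1
  · refine congrArg Multiset.sum (Multiset.map_congr rfl ?_)
    intro a ha
    simp [cpost, hbar a (hα a ha), hbinv a (hα a ha)]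
  · refine congrArg Multiset.sum (Multiset.map_congr rfl ?_)
    intro b hb
    simp [cpost, hβ b hb]

lemma combNet_PRE_inr {α β : Multiset A}
    (hbar : ∀ a ∈ T', bar a ∉ T') (hbinv : ∀ a ∈ T', binv (bar a) = a)
    (hα : ∀ a ∈ α, a ∈ T') (hβ : ∀ b ∈ β, b ∈ T') (q : Fin m) :
    (combNet T' bar binv Nf Nr M0 hpos).PRE (Multiset.map bar α + β) (Sum.inr q)
      = Nr.PRE (Multiset.map bar α) q + Nr.POST (Multiset.map bar β) q := by
  show ((Multiset.map bar α + β).map fun a => cpre T' bar binv Nf Nr (Sum.inr q) a).sum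
      = Nr.PRE (Multiset.map bar α) q + Nr.POST (Multiset.map bar β) q
  rw [Multiset.map_add, Multiset.sum_add, Multiset.map_map]
  show _ = ((Multiset.map bar α).map fun b => Nr.pre q b).sum
      + ((Multiset.map bar β).map fun b => Nr.post b q).sum
  rw [Multiset.map_map, Multiset.map_map]
  congr 1
  · refine congrArg Multiset.sum (Multiset.map_congr rfl ?_)
    intro a ha
    simp [cpre, hbar a (hα a ha)]
  · refine congrArg Multiset.sum (Multiset.map_congr rfl ?_)
    intro b hb
    simp [cpre, hβ b hb]

lemma combNet_POST_inr {α β : Multiset A}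
    (hbar : ∀ a ∈ T', bar a ∉ T') (hbinv : ∀ a ∈ T', binv (bar a) = a)
    (hα : ∀ a ∈ α, a ∈ T') (hβ : ∀ b ∈ β, b ∈ T') (q : Fin m) :
    (combNet T' bar binv Nf Nr M0 hpos).POST (Multiset.map bar α + β) (Sum.inr q)
      = Nr.POST (Multiset.map bar α) q + Nr.PRE (Multiset.map bar β) q := by
  show ((Multiset.map bar α + β).map fun a => cpost T' bar binv Nf Nr a (Sum.inr q)).sum
      = Nr.POST (Multiset.map bar α) q + Nr.PRE (Multiset.map bar β) q
  rw [Multiset.map_add, Multiset.sum_add, Multiset.map_map]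
  show _ = ((Multiset.map bar α).map fun b => Nr.post b q).sum
      + ((Multiset.map bar β).map fun b => Nr.pre q b).sum
  rw [Multiset.map_map, Multiset.map_map]
  congr 1
  · refine congrArg Multiset.sum (Multiset.map_congr rfl ?_)
    intro a ha
    simp [cpost, hbar a (hα a ha)]
  · refine congrArg Multiset.sum (Multiset.map_congr rfl ?_)
    intro b hb
    simp [cpost, hβ b hb]

end Comb
section ReverseDir

open STS

variable {S A : Type*} [DecidableEq A]

lemma reverse_dir (X : STS S A) (bar : A → A) (hX : X.IsCEST) (hg : X.GoodRev bar)
    {n m : ℕ} (Nf : PTNet (Fin n) A) (Nr : PTNet (Fin m) A)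
    (φf : S → Fin n → ℕ) (φr : S → Fin m → ℕ)
    (hfinj : Function.Injective φf)
    (hNfT : Nf.T = X.T) (hNrT : Nr.T = X.T.image bar)
    (hF1 : ∀ {s α s'}, X.tr s α s' → Nf.Enabled (φf s) α ∧ φf s' = Nf.fire (φf s) α)
    (hF2 : ∀ s α, Nf.Enabled (φf s) α → ∃ s', X.tr s α s')
    (hF3 : ∀ {s α u}, X.tr s α u →
      Nr.Enabled (φr u) (Multiset.map bar α) ∧
        φr s = Nr.fire (φr u) (Multiset.map bar α))
    (hF4 : ∀ u γ, Nr.Enabled (φr u) γ →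
      ∃ s αa, γ = Multiset.map bar αa ∧ (∀ a ∈ αa, a ∈ X.T) ∧ X.tr s αa u) :
    STSSolvable (X.mixrevSTS bar) := by
  classical
  obtain ⟨hLab, hCE, hREA, hEL, hSEQ⟩ := hX
  -- a partial inverse of `bar` on `X.T`
  set binv : A → A := fun b => if h : ∃ a, a ∈ X.T ∧ bar a = b then h.choose else b
    with hbinvdef
  have hbinv : ∀ a ∈ X.T, binv (bar a) = a := by
    intro a ha
    have hex : ∃ a', a' ∈ X.T ∧ bar a' = bar a := ⟨a, ha, rfl⟩
    rw [hbinvdef]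
    simp only [dif_pos hex]
    exact hg.1 (Finset.mem_coe.mpr hex.choose_spec.1) (Finset.mem_coe.mpr ha)
      hex.choose_spec.2
  have hbar : ∀ a ∈ X.T, bar a ∉ X.T := hg.2
  -- the combined net
  have hpos : ∀ a ∈ X.T ∪ X.T.image bar, ∃ p, 0 < cpre X.T bar binv Nf Nr p a := by
    intro a ha
    rcases Finset.mem_union.1 ha with h | h
    · obtain ⟨p, hp⟩ := Nf.pre_pos a (hNfT ▸ h)
      exact ⟨Sum.inl p, by simpa [cpre, h] using hp⟩
    · obtain ⟨b, hb, rfl⟩ := Finset.mem_image.1 h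
      obtain ⟨q, hq⟩ := Nr.pre_pos (bar b) (hNrT ▸ Finset.mem_image.2 ⟨b, hb, rfl⟩)
      exact ⟨Sum.inr q, by simpa [cpre, hbar b hb] using hq⟩
  set NN : PTNet (Fin n ⊕ Fin m) A :=
    combNet X.T bar binv Nf Nr (Sum.elim (φf X.init) (φr X.init)) hpos with hNN
  -- from mixrev transitions to the net
  have hM : ∀ {u γ v}, (X.mixrevSTS bar).tr u γ v →
      NN.Enabled (Sum.elim (φf u) (φr u)) γ ∧
        Sum.elim (φf v) (φr v) = NN.fire (Sum.elim (φf u) (φr u)) γ := by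
    rintro u γ v ⟨s, α, β, rfl, ⟨w, hw⟩, hα, hβ⟩
    have hαT : ∀ a ∈ α, a ∈ X.T := fun a ha => hLab _ _ _ hα a ha
    have hβT : ∀ b ∈ β, b ∈ X.T := fun b hb => hLab _ _ _ hβ b hb
    have hlabels : ∀ b ∈ Multiset.map bar α + β, b ∈ NN.T := by
      intro b hb
      rcases Multiset.mem_add.1 hb with h | h
      · obtain ⟨a, ha, rfl⟩ := Multiset.mem_map.1 h
        exact Finset.mem_union.2 (Or.inr (Finset.mem_image.2 ⟨a, hαT a ha, rfl⟩))
      · exact Finset.mem_union.2 (Or.inl (hβT b h))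
    -- pointwise facts
    have hfα1 := (hF1 hα).1.2
    have hfα2 : ∀ p, φf u p = φf s p - Nf.PRE α p + Nf.POST α p := by
      intro p
      have := congrFun (hF1 hα).2 p
      simpa [PTNet.fire] using this
    have hfβ1 := (hF1 hβ).1.2
    have hfβ2 : ∀ p, φf v p = φf s p - Nf.PRE β p + Nf.POST β p := by
      intro p
      have := congrFun (hF1 hβ).2 p
      simpa [PTNet.fire] using this
    have hfw1 : ∀ p, Nf.PRE α p + Nf.PRE β p ≤ φf s p := by
      intro p
      have := (hF1 hw).1.2 p
      rwa [PTNet.PRE_add'] at this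
    have hrα1 := (hF3 hα).1.2
    have hrα2 : ∀ q, φr s q = φr u q - Nr.PRE (Multiset.map bar α) q
        + Nr.POST (Multiset.map bar α) q := by
      intro q
      have := congrFun (hF3 hα).2 q
      simpa [PTNet.fire] using this
    have hrβ1 := (hF3 hβ).1.2
    have hrβ2 : ∀ q, φr s q = φr v q - Nr.PRE (Multiset.map bar β) q
        + Nr.POST (Multiset.map bar β) q := by
      intro q
      have := congrFun (hF3 hβ).2 q
      simpa [PTNet.fire] using this
    have hrw1 : ∀ q, Nr.PRE (Multiset.map bar α) q + Nr.PRE (Multiset.map bar β) q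
        ≤ φr w q := by
      intro q
      have := (hF3 hw).1.2 q
      rwa [Multiset.map_add, PTNet.PRE_add'] at this
    have hrw2 : ∀ q, φr s q = φr w q
        - (Nr.PRE (Multiset.map bar α) q + Nr.PRE (Multiset.map bar β) q)
        + (Nr.POST (Multiset.map bar α) q + Nr.POST (Multiset.map bar β) q) := by
      intro q
      have := congrFun (hF3 hw).2 q
      simp only [PTNet.fire] at this
      rwa [Multiset.map_add, PTNet.PRE_add', PTNet.POST_add'] at this
    refine ⟨⟨hlabels, ?_⟩, ?_⟩
    · rintro (p | q)
      · rw [combNet_PRE_inl X.T bar binv Nf Nr _ hpos hbar hbinv hαT hβT p]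
        have h1 := hfα1 p; have h2 := hfα2 p; have h3 := hfw1 p
        simp only [Sum.elim_inl]
        omega
      · rw [combNet_PRE_inr X.T bar binv Nf Nr _ hpos hbar hbinv hαT hβT q]
        have h1 := hrα1 q; have h2 := hrα2 q; have h3 := hrβ1 q
        have h4 := hrβ2 q; have h5 := hrw1 q; have h6 := hrw2 q
        simp only [Sum.elim_inr]
        omega
    · funext p
      rcases p with p | q
      · simp only [Sum.elim_inl, PTNet.fire]
        rw [combNet_PRE_inl X.T bar binv Nf Nr _ hpos hbar hbinv hαT hβT p,
          combNet_POST_inl X.T bar binv Nf Nr _ hpos hbar hbinv hαT hβT p]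
        try simp only [Sum.elim_inl]
        have h1 := hfα1 p; have h2 := hfα2 p; have h3 := hfw1 p
        have h4 := hfβ1 p; have h5 := hfβ2 p
        omega
      · simp only [Sum.elim_inr, PTNet.fire]
        rw [combNet_PRE_inr X.T bar binv Nf Nr _ hpos hbar hbinv hαT hβT q,
          combNet_POST_inr X.T bar binv Nf Nr _ hpos hbar hbinv hαT hβT q]
        try simp only [Sum.elim_inr]
        have h1 := hrα1 q; have h2 := hrα2 q; have h3 := hrβ1 q
        have h4 := hrβ2 q; have h5 := hrw1 q; have h6 := hrw2 q
        omega
  -- from the net to mixrev transitions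
  have hE : ∀ u γ, NN.Enabled (Sum.elim (φf u) (φr u)) γ →
      ∃ v, (X.mixrevSTS bar).tr u γ v ∧
        Sum.elim (φf v) (φr v) = NN.fire (Sum.elim (φf u) (φr u)) γ := by
    intro u γ hEn
    obtain ⟨hlab, hple⟩ := hEn
    -- decompose γ
    set β : Multiset A := γ.filter (· ∈ X.T) with hβdef
    set γ' : Multiset A := γ.filter (fun b => ¬ b ∈ X.T) with hγ'def
    have hβT : ∀ b ∈ β, b ∈ X.T := fun b hb => Multiset.of_mem_filter hb
    have hγ'mem : ∀ b ∈ γ', ∃ a ∈ X.T, bar a = b := by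
      intro b hb
      have hbT := Multiset.of_mem_filter hb
      have := hlab b (Multiset.mem_of_mem_filter hb)
      rcases Finset.mem_union.1 this with h | h
      · exact absurd h hbT
      · obtain ⟨a, ha, rfl⟩ := Finset.mem_image.1 h
        exact ⟨a, ha, rfl⟩
    set α : Multiset A := γ'.map binv with hαdef
    have hmapback : Multiset.map bar α = γ' := by
      rw [hαdef, Multiset.map_map]
      have : ∀ b ∈ γ', (bar ∘ binv) b = id b := by
        intro b hb
        obtain ⟨a, haT, rfl⟩ := hγ'mem b hb
        simp [Function.comp, hbinv a haT]
      rw [Multiset.map_congr rfl this, Multiset.map_id]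
    have hαT : ∀ a ∈ α, a ∈ X.T := by
      intro a ha
      rw [hαdef] at ha
      obtain ⟨b, hb, rfl⟩ := Multiset.mem_map.1 ha
      obtain ⟨a', ha', rfl⟩ := hγ'mem b hb
      rw [hbinv a' ha']
      exact ha'
    have hγeq : γ = Multiset.map bar α + β := by
      rw [hmapback, add_comm]
      exact (Multiset.filter_add_not (· ∈ X.T) γ).symm
    -- the reverse part gives a source state s
    have hpr : ∀ q, Nr.PRE (Multiset.map bar α) q + Nr.POST (Multiset.map bar β) q
        ≤ φr u q := by
      intro q
      have := hple (Sum.inr q)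
      rw [hγeq, combNet_PRE_inr X.T bar binv Nf Nr _ hpos hbar hbinv hαT hβT q] at this
      simpa using this
    have hEnr : Nr.Enabled (φr u) (Multiset.map bar α) := by
      refine ⟨?_, fun q => le_trans (Nat.le_add_right _ _) (hpr q)⟩
      intro b hb
      obtain ⟨a, ha, rfl⟩ := Multiset.mem_map.1 hb
      exact hNrT ▸ Finset.mem_image.2 ⟨a, hαT a ha, rfl⟩
    obtain ⟨s, α'', hγr, hα''T, hsu⟩ := hF4 u (Multiset.map bar α) hEnr
    have hγeq2 : γ = Multiset.map bar α'' + β := by rw [hγeq, hγr]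
    have hpl : ∀ p, Nf.POST α'' p + Nf.PRE β p ≤ φf u p := by
      intro p
      have := hple (Sum.inl p)
      rw [hγeq2, combNet_PRE_inl X.T bar binv Nf Nr _ hpos hbar hbinv hα''T hβT p] at this
      simpa using this
    have hpr2 : ∀ q, Nr.PRE (Multiset.map bar α'') q
        + Nr.POST (Multiset.map bar β) q ≤ φr u q := by
      intro q
      rw [← hγr]
      exact hpr q
    -- the forward part gives the step α'' + β at s
    have hfα1 := (hF1 hsu).1.2
    have hfα2 : ∀ p, φf u p = φf s p - Nf.PRE α'' p + Nf.POST α'' p := by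
      intro p
      have := congrFun (hF1 hsu).2 p
      simpa [PTNet.fire] using this
    have hEnf : Nf.Enabled (φf s) (α'' + β) := by
      refine ⟨?_, ?_⟩
      · intro a ha
        rcases Multiset.mem_add.1 ha with h | h
        · exact hNfT ▸ hα''T a h
        · exact hNfT ▸ hβT a h
      · intro p
        rw [PTNet.PRE_add']
        have h1 := hfα1 p; have h2 := hfα2 p; have h3 := hpl p
        omega
    obtain ⟨w, hw⟩ := hF2 s (α'' + β) hEnf
    obtain ⟨v, hv⟩ := STS.seq_right hSEQ hw
    refine ⟨v, ⟨s, α'', β, hγeq2, ⟨w, hw⟩, hsu, hv⟩, ?_⟩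
    -- the firing relation
    have hfβ1 := (hF1 hv).1.2
    have hfβ2 : ∀ p, φf v p = φf s p - Nf.PRE β p + Nf.POST β p := by
      intro p
      have := congrFun (hF1 hv).2 p
      simpa [PTNet.fire] using this
    have hfw1 : ∀ p, Nf.PRE α'' p + Nf.PRE β p ≤ φf s p := by
      intro p
      have := (hF1 hw).1.2 p
      rwa [PTNet.PRE_add'] at this
    have hrα1 := (hF3 hsu).1.2
    have hrα2 : ∀ q, φr s q = φr u q - Nr.PRE (Multiset.map bar α'') q
        + Nr.POST (Multiset.map bar α'') q := by
      intro q
      have := congrFun (hF3 hsu).2 q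
      simpa [PTNet.fire] using this
    have hrβ1 := (hF3 hv).1.2
    have hrβ2 : ∀ q, φr s q = φr v q - Nr.PRE (Multiset.map bar β) q
        + Nr.POST (Multiset.map bar β) q := by
      intro q
      have := congrFun (hF3 hv).2 q
      simpa [PTNet.fire] using this
    have hrw1 : ∀ q, Nr.PRE (Multiset.map bar α'') q + Nr.PRE (Multiset.map bar β) q
        ≤ φr w q := by
      intro q
      have := (hF3 hw).1.2 q
      rwa [Multiset.map_add, PTNet.PRE_add'] at this
    have hrw2 : ∀ q, φr s q = φr w q
        - (Nr.PRE (Multiset.map bar α'') q + Nr.PRE (Multiset.map bar β) q)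
        + (Nr.POST (Multiset.map bar α'') q + Nr.POST (Multiset.map bar β) q) := by
      intro q
      have := congrFun (hF3 hw).2 q
      simp only [PTNet.fire] at this
      rwa [Multiset.map_add, PTNet.PRE_add', PTNet.POST_add'] at this
    funext p
    rcases p with p | q
    · simp only [Sum.elim_inl, PTNet.fire]
      rw [hγeq2, combNet_PRE_inl X.T bar binv Nf Nr _ hpos hbar hbinv hα''T hβT p,
        combNet_POST_inl X.T bar binv Nf Nr _ hpos hbar hbinv hα''T hβT p]
      try simp only [Sum.elim_inl]
      have h1 := hfα1 p; have h2 := hfα2 p; have h3 := hpl p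
      have h4 := hfβ1 p; have h5 := hfβ2 p; have h6 := hfw1 p
      omega
    · simp only [Sum.elim_inr, PTNet.fire]
      rw [hγeq2, combNet_PRE_inr X.T bar binv Nf Nr _ hpos hbar hbinv hα''T hβT q,
        combNet_POST_inr X.T bar binv Nf Nr _ hpos hbar hbinv hα''T hβT q]
      try simp only [Sum.elim_inr]
      have h1 := hrα1 q; have h2 := hrα2 q; have h3 := hrβ1 q
      have h4 := hrβ2 q; have h5 := hrw1 q; have h6 := hrw2 q
      have h7 := hpr2 q
      omega
  -- reachable markings are exactly the states
  have hreach1 : ∀ s, NN.Reach (Sum.elim (φf s) (φr s)) := by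
    intro s
    have key : ∀ s', X.ReachFrom X.init s' → NN.Reach (Sum.elim (φf s') (φr s')) := by
      intro s' h
      induction h with
      | refl => exact PTNet.Reach.init
      | step h ht ih =>
        have hmix := STS.mix_of_fwd (bar := bar) hEL ht
        have := hM hmix
        exact this.2 ▸ PTNet.Reach.step ih this.1
    exact key s (hREA s)
  have hreach2 : ∀ M, NN.Reach M → ∃ s, M = Sum.elim (φf s) (φr s) := by
    intro M h
    induction h with
    | init => exact ⟨X.init, rfl⟩
    | step h hEn ih =>
      obtain ⟨s, rfl⟩ := ih
      obtain ⟨v, _, hfire⟩ := hE s _ hEn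
      exact ⟨v, hfire.symm⟩
  have hΦinj : Function.Injective (fun s => Sum.elim (φf s) (φr s)) := by
    intro a b h
    apply hfinj
    funext p
    exact congrFun h (Sum.inl p)
  let e : S ≃ {M : Fin n ⊕ Fin m → ℕ // NN.Reach M} :=
    Equiv.ofBijective (fun s => ⟨Sum.elim (φf s) (φr s), hreach1 s⟩)
      ⟨fun a b h => hΦinj (congrArg Subtype.val h),
       fun M => (hreach2 M.1 M.2).imp fun s hs => Subtype.ext hs.symm⟩
  have hiso : STS.IsoSTS (X.mixrevSTS bar) (CRG NN) := by
    refine ⟨e, Subtype.ext rfl, rfl, ?_⟩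
    intro u γ v
    constructor
    · intro h
      have := hM h
      exact ⟨this.1, this.2⟩
    · rintro ⟨hEn, hfe⟩
      obtain ⟨v', hv', hf⟩ := hE u γ hEn
      have : v = v' := by
        apply hΦinj
        show Sum.elim (φf v) (φr v) = Sum.elim (φf v') (φr v')
        rw [hf]
        exact hfe
      rw [this]
      exact hv'
  exact solvable_transport hiso

end ReverseDir
/-- For a home state `r`, `TS^mixrev` is solvable iff both `TS` and `TS̄_r`
are solvable. -/
theorem stmt13 {S A : Type*} [DecidableEq A] (X : STS S A) (bar : A → A)
    (hX : X.IsCEST) (hg : X.GoodRev bar)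
    (r : S) (hr : ∀ s, X.ReachFrom s r) :
    STSSolvable (X.mixrevSTS bar) ↔
      (STSSolvable X ∧ STSSolvable (X.revRestrict bar r)) := by
  classical
  obtain ⟨hLab, hCE, hREA, hEL, hSEQ⟩ := hX
  have hX' : X.IsCEST := ⟨hLab, hCE, hREA, hEL, hSEQ⟩
  constructor
  · rintro ⟨n, N, ψ, hinit, hT, htr⟩
    have hinit1 : (ψ X.init).1 = N.M0 := congrArg Subtype.val hinit
    have hTsub : X.T ⊆ N.T := by
      rw [show N.T = (CRG N).T from rfl, ← hT]
      exact Finset.subset_union_left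
    have hTbar : X.T.image bar ⊆ N.T := by
      rw [show N.T = (CRG N).T from rfl, ← hT]
      exact Finset.subset_union_right
    constructor
    · -- TS is solvable
      set NA : PTNet (Fin n) A := N.restrict X.T with hNA
      have hAreach1 : ∀ {s s'}, X.ReachFrom s s' →
          NA.Reach (ψ s).1 → NA.Reach (ψ s').1 := by
        intro s s' h
        induction h with
        | refl => exact id
        | step h ht ih =>
          intro hs
          have hmix := STS.mix_of_fwd (bar := bar) hEL ht
          obtain ⟨hEnN, hfe⟩ := (htr _ _ _).1 hmix
          have hEnA : NA.Enabled (ψ _).1 _ :=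
            ⟨fun a ha => Finset.mem_inter.2 ⟨hEnN.1 a ha, hLab _ _ _ ht a ha⟩, hEnN.2⟩
          rw [hfe]
          exact PTNet.Reach.step (ih hs) hEnA
      have hAreach : ∀ s, NA.Reach (ψ s).1 := by
        intro s
        refine hAreach1 (hREA s) ?_
        rw [hinit1]
        exact PTNet.Reach.init
      have hAsurj : ∀ M, NA.Reach M → ∃ s, (ψ s).1 = M := by
        intro M h
        induction h with
        | init => exact ⟨X.init, hinit1⟩
        | step h hEn ih =>
          obtain ⟨s, rfl⟩ := ih
          have hEnN : N.Enabled (ψ s).1 _ :=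
            ⟨fun a ha => (Finset.mem_inter.1 (hEn.1 a ha)).1, hEn.2⟩
          have hR' : N.Reach (N.fire (ψ s).1 _) := PTNet.Reach.step (ψ s).2 hEnN
          exact ⟨ψ.symm ⟨_, hR'⟩, congrArg Subtype.val (Equiv.apply_symm_apply ψ _)⟩
      let eA : S ≃ {M : Fin n → ℕ // NA.Reach M} :=
        Equiv.ofBijective (fun s => ⟨(ψ s).1, hAreach s⟩)
          ⟨fun a b h => by
            apply ψ.injective
            apply Subtype.ext
            have h2 := congrArg Subtype.val h
            exact h2,
           fun M => (hAsurj M.1 M.2).imp fun s hs => Subtype.ext hs⟩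
      refine ⟨n, NA, eA, Subtype.ext hinit1, ?_, ?_⟩
      · show X.T = N.T ∩ X.T
        exact (Finset.inter_eq_right.mpr hTsub).symm
      · intro s α s'
        constructor
        · intro h
          have hmix := STS.mix_of_fwd (bar := bar) hEL h
          obtain ⟨hEnN, hfe⟩ := (htr _ _ _).1 hmix
          exact ⟨⟨fun a ha => Finset.mem_inter.2 ⟨hEnN.1 a ha, hLab _ _ _ h a ha⟩,
            hEnN.2⟩, hfe⟩
        · rintro ⟨hEn, hfe⟩
          have hEnN : N.Enabled (ψ s).1 α :=
            ⟨fun a ha => (Finset.mem_inter.1 (hEn.1 a ha)).1, hEn.2⟩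
          have hCRG : (CRG N).tr (ψ s) α (ψ s') := ⟨hEnN, hfe⟩
          exact STS.mix_pure hX' hg ((htr _ _ _).2 hCRG)
            (fun b hb => (Finset.mem_inter.1 (hEn.1 b hb)).2)
    · -- the restricted reverse is solvable
      set NB : PTNet (Fin n) A :=
        { N.restrict (X.T.image bar) with M0 := (ψ r).1 } with hNB
      have hBreach1 : ∀ {s s'}, X.ReachFrom s s' →
          NB.Reach (ψ s').1 → NB.Reach (ψ s).1 := by
        intro s s' h
        induction h with
        | refl => exact id
        | step h ht ih =>
          intro hs'
          have hmix := STS.mix_of_bwd (bar := bar) hEL ht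
          obtain ⟨hEnN, hfe⟩ := (htr _ _ _).1 hmix
          apply ih
          rw [hfe]
          refine PTNet.Reach.step hs'
            ⟨fun b hb => Finset.mem_inter.2 ⟨hEnN.1 b hb, ?_⟩, hEnN.2⟩
          obtain ⟨a, ha, rfl⟩ := Multiset.mem_map.1 hb
          exact Finset.mem_image.2 ⟨a, hLab _ _ _ ht a ha, rfl⟩
      have hBreach : ∀ s : {s : S // X.ReachFrom s r}, NB.Reach (ψ s.1).1 := by
        intro s
        exact hBreach1 s.2 PTNet.Reach.init
      have hBsurj : ∀ M, NB.Reach M → ∃ s, X.ReachFrom s r ∧ (ψ s).1 = M := by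
        intro M h
        induction h with
        | init => exact ⟨r, STS.ReachFrom.refl r, rfl⟩
        | step h hEn ih =>
          obtain ⟨s, hsr, rfl⟩ := ih
          have hEnN : N.Enabled (ψ s).1 _ :=
            ⟨fun a ha => (Finset.mem_inter.1 (hEn.1 a ha)).1, hEn.2⟩
          have hR' : N.Reach (N.fire (ψ s).1 _) := PTNet.Reach.step (ψ s).2 hEnN
          have hCRG : (CRG N).tr (ψ s) _ (ψ (ψ.symm ⟨_, hR'⟩)) :=
            ⟨hEnN, congrArg Subtype.val (Equiv.apply_symm_apply ψ _)⟩
          have hmix := (htr _ _ _).2 hCRG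
          obtain ⟨αa, -, -, hαtr⟩ := STS.mix_rev hX' hg hmix
            (fun b hb => (Finset.mem_inter.1 (hEn.1 b hb)).2)
          refine ⟨ψ.symm ⟨_, hR'⟩, ?_, congrArg Subtype.val (Equiv.apply_symm_apply ψ _)⟩
          exact STS.ReachFrom.trans' (STS.ReachFrom.step (STS.ReachFrom.refl _) hαtr) hsr
      let eB : {s : S // X.ReachFrom s r} ≃ {M : Fin n → ℕ // NB.Reach M} :=
        Equiv.ofBijective (fun s => ⟨(ψ s.1).1, hBreach s⟩)
          ⟨fun a b h => by
            apply Subtype.ext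
            have h2 := congrArg Subtype.val h
            have h3 : ψ a.1 = ψ b.1 := Subtype.ext h2
            exact ψ.injective h3,
           fun M => by
            obtain ⟨s, hsr, hs⟩ := hBsurj M.1 M.2
            exact ⟨⟨s, hsr⟩, Subtype.ext hs⟩⟩
      refine ⟨n, NB, eB, Subtype.ext rfl, ?_, ?_⟩
      · show X.T.image bar = N.T ∩ X.T.image bar
        exact (Finset.inter_eq_right.mpr hTbar).symm
      · intro u γ v
        constructor
        · rintro ⟨α, rfl, hα⟩
          have hmix := STS.mix_of_bwd (bar := bar) hEL hα
          obtain ⟨hEnN, hfe⟩ := (htr _ _ _).1 hmix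
          refine ⟨⟨fun b hb => Finset.mem_inter.2 ⟨hEnN.1 b hb, ?_⟩, hEnN.2⟩, hfe⟩
          obtain ⟨a, ha, rfl⟩ := Multiset.mem_map.1 hb
          exact Finset.mem_image.2 ⟨a, hLab _ _ _ hα a ha, rfl⟩
        · rintro ⟨hEn, hfe⟩
          have hEnN : N.Enabled (ψ u.1).1 γ :=
            ⟨fun a ha => (Finset.mem_inter.1 (hEn.1 a ha)).1, hEn.2⟩
          have hCRG : (CRG N).tr (ψ u.1) γ (ψ v.1) := ⟨hEnN, hfe⟩
          obtain ⟨α, hγ, -, hαtr⟩ := STS.mix_rev hX' hg ((htr _ _ _).2 hCRG)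
            (fun b hb => (Finset.mem_inter.1 (hEn.1 b hb)).2)
          exact ⟨α, hγ, hαtr⟩
  · rintro ⟨⟨n, Nf, ψf, hfinit, hfT, hftr⟩, ⟨m, Nr, ψr, hrinit, hrT, hrtr⟩⟩
    refine reverse_dir X bar hX' hg Nf Nr (fun s => (ψf s).1)
      (fun s => (ψr ⟨s, hr s⟩).1) ?_ hfT.symm hrT.symm ?_ ?_ ?_ ?_
    · intro a b h
      exact ψf.injective (Subtype.ext h)
    · intro s α s' h
      exact (hftr s α s').1 h
    · intro s α hEn
      have hR' : Nf.Reach (Nf.fire (ψf s).1 α) := PTNet.Reach.step (ψf s).2 hEn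
      refine ⟨ψf.symm ⟨_, hR'⟩, (hftr _ _ _).2 ?_⟩
      exact ⟨hEn, congrArg Subtype.val (Equiv.apply_symm_apply ψf _)⟩
    · intro s α u h
      have hrev : (X.revRestrict bar r).tr ⟨u, hr u⟩ (Multiset.map bar α) ⟨s, hr s⟩ :=
        ⟨α, rfl, h⟩
      exact (hrtr _ _ _).1 hrev
    · intro u γ hEn
      have hR' : Nr.Reach (Nr.fire (ψr ⟨u, hr u⟩).1 γ) :=
        PTNet.Reach.step (ψr ⟨u, hr u⟩).2 hEn
      have hCRG : (CRG Nr).tr (ψr ⟨u, hr u⟩) γ (ψr (ψr.symm ⟨_, hR'⟩)) :=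
        ⟨hEn, congrArg Subtype.val (Equiv.apply_symm_apply ψr _)⟩
      have hrevtr := (hrtr _ _ _).2 hCRG
      obtain ⟨α, hγ, hα⟩ := hrevtr
      exact ⟨(ψr.symm ⟨_, hR'⟩).1, α, hγ, fun a ha => hLab _ _ _ hα a ha, hα⟩
end

section
/- Let TS=(S,T,→,s₀) be a set CEST-system (every transition label is a set) and r a home state of TS, and let TS̄_r be the restriction of the reversed system to the states from which r is reachable in TS, with initial state r. Then TS^rev is solvable if and only if both TS and TS̄_r are solvable. -/
section Stmt14Aux

open STS PTNet

variable {S A : Type*} [DecidableEq A]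

set_option linter.unusedSectionVars false

lemma STS.det14 {X : STS S A} (hce : X.CE) {s t1 t2 : S} {α : Multiset A}
    (h1 : X.tr s α t1) (h2 : X.tr s α t2) : t1 = t2 :=
  hce s t1 t2 _ _ (STS.PathSig.fwd (STS.PathSig.nil s) h1)
    (STS.PathSig.fwd (STS.PathSig.nil s) h2) (STS.Bowtie.refl _)

lemma STS.ReachFrom.trans14 {X : STS S A} {a b c : S} (h1 : X.ReachFrom a b)
    (h2 : X.ReachFrom b c) : X.ReachFrom a c := by
  induction h2 with
  | refl => exact h1
  | step _ ht ih => exact STS.ReachFrom.step ih ht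

lemma sum_ite_pair14 (α : Multiset A) {a b : A} (hab : a ≠ b) :
    (α.map fun c => if c = a ∨ c = b then 1 else 0).sum = α.count a + α.count b := by
  induction α using Multiset.induction with
  | empty => simp
  | cons c α ih =>
    simp only [Multiset.map_cons, Multiset.sum_cons, ih, Multiset.count_cons]
    by_cases h1 : c = a
    · subst h1
      have h2 : ¬ b = c := fun h => hab (h ▸ rfl)
      simp [h2]
      omega
    · by_cases h2 : c = b
      · subst h2
        have h1' : ¬ a = c := fun h => h1 h.symm
        simp [h1', h1]
        omega
      · have h1' : ¬ a = c := fun h => h1 h.symm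
        have h2' : ¬ b = c := fun h => h2 h.symm
        simp [h1, h2, h1', h2']

lemma PTNet.fire_zero14 {P : Type*} (N : PTNet P A) (M : P → ℕ) :
    N.fire M 0 = M := by
  funext p; simp [PTNet.fire, PTNet.PRE, PTNet.POST]

/-- Transport solvability along a finite place type. -/
lemma solvable_of_iso_fin14 {S' : Type*} {P : Type*} [Fintype P] (Y : STS S' A)
    (N : PTNet P A) (h : Y.IsoSTS (CRG N)) : STSSolvable Y := by
  classical
  obtain ⟨ψ, hinit, hT, htr⟩ := h
  let n := Fintype.card P
  let e : P ≃ Fin n := Fintype.equivFin P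
  let N' : PTNet (Fin n) A :=
    { T := N.T
      pre := fun p a => N.pre (e.symm p) a
      post := fun a p => N.post a (e.symm p)
      M0 := fun p => N.M0 (e.symm p)
      pre_pos := by
        intro a ha
        obtain ⟨p, hp⟩ := N.pre_pos a ha
        exact ⟨e p, by simpa using hp⟩ }
  have hPRE : ∀ (α : Multiset A) (p : Fin n),
      N'.PRE α p = N.PRE α (e.symm p) := fun _ _ => rfl
  have hen : ∀ (M : P → ℕ) (α : Multiset A),
      N'.Enabled (fun q => M (e.symm q)) α ↔ N.Enabled M α := by
    intro M α
    constructor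
    · rintro ⟨h1, h2⟩
      refine ⟨h1, fun p => ?_⟩
      have := h2 (e p)
      rw [hPRE] at this
      simpa using this
    · rintro ⟨h1, h2⟩
      refine ⟨h1, fun p => ?_⟩
      rw [hPRE]
      exact h2 (e.symm p)
  have hreachF : ∀ (M : P → ℕ), N.Reach M → N'.Reach (fun q => M (e.symm q)) := by
    intro M hM
    induction hM with
    | init => exact PTNet.Reach.init
    | step hre hen' ih =>
      exact PTNet.Reach.step ih ((hen _ _).2 hen')
  have hreachB : ∀ (M' : Fin n → ℕ), N'.Reach M' → ∃ M : P → ℕ,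
      N.Reach M ∧ M' = fun q => M (e.symm q) := by
    intro M' hM'
    induction hM' with
    | init => exact ⟨N.M0, PTNet.Reach.init, rfl⟩
    | @step M' α hre hen' ih =>
      obtain ⟨M, hM, rfl⟩ := ih
      exact ⟨N.fire M α, PTNet.Reach.step hM ((hen _ _).1 hen'), rfl⟩
  let Φ : {M : P → ℕ // N.Reach M} ≃ {M' : Fin n → ℕ // N'.Reach M'} :=
    { toFun := fun M => ⟨fun q => M.1 (e.symm q), hreachF M.1 M.2⟩
      invFun := fun M' => ⟨fun p => M'.1 (e p), by
        obtain ⟨M, hM, hMe⟩ := hreachB M'.1 M'.2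
        have : (fun p => M'.1 (e p)) = M := by
          funext p; rw [hMe]; simp
        rw [this]; exact hM⟩
      left_inv := fun M => Subtype.ext (by funext p; simp)
      right_inv := fun M' => Subtype.ext (by funext q; simp) }
  refine ⟨n, N', ψ.trans Φ, ?_, hT, ?_⟩
  · show Φ (ψ Y.init) = (CRG N').init
    rw [hinit]
    exact Subtype.ext rfl
  · intro s α s'
    rw [htr s α s']
    show (CRG N).tr (ψ s) α (ψ s') ↔ (CRG N').tr (Φ (ψ s)) α (Φ (ψ s'))
    constructor
    · rintro ⟨h1, h2⟩
      refine ⟨(hen _ _).2 h1, ?_⟩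
      show (fun q => (ψ s').1 (e.symm q)) = N'.fire (fun q => (ψ s).1 (e.symm q)) α
      funext q
      show (ψ s').1 (e.symm q) = N.fire (ψ s).1 α (e.symm q)
      rw [h2]
    · rintro ⟨h1, h2⟩
      refine ⟨(hen _ _).1 h1, ?_⟩
      funext p
      have := congrFun h2 (e p)
      have h3 : (Φ (ψ s')).1 (e p) = (ψ s').1 p := by
        show (ψ s').1 (e.symm (e p)) = (ψ s').1 p
        simp
      have h4 : N'.fire (Φ (ψ s)).1 α (e p) = N.fire (ψ s).1 α p := by
        show (ψ s).1 (e.symm (e p)) - N.PRE α (e.symm (e p)) + N.POST α (e.symm (e p))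
            = N.fire (ψ s).1 α p
        simp [PTNet.fire]
      rw [h3, h4] at this
      exact this

end Stmt14Aux

section Stmt14B

open STS PTNet

variable {S A : Type*} [DecidableEq A]

set_option linter.unusedSectionVars false

lemma stmt14_forward (X : STS S A) (bar : A → A) (hX : X.IsCEST)
    (hg : X.GoodRev bar) (r : S) (hr : ∀ s, X.ReachFrom s r)
    (h : STSSolvable (X.revSTS bar)) :
    STSSolvable X ∧ STSSolvable (X.revRestrict bar r) := by
  classical
  obtain ⟨hlab, hce, hrea, hel, -⟩ := hX
  obtain ⟨n, N, ψ, hinit, hT, htr⟩ := h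
  have hm0 : (ψ X.init).1 = N.M0 := congrArg Subtype.val hinit
  have hT' : X.T ∪ X.T.image bar = N.T := hT
  have hTsub : X.T ⊆ N.T := by rw [← hT']; exact Finset.subset_union_left
  have hTbar : X.T.image bar ⊆ N.T := by rw [← hT']; exact Finset.subset_union_right
  have hdisj : ∀ a ∈ X.T, a ∉ X.T.image bar := by
    intro a ha hmem
    obtain ⟨b, hb, hba⟩ := Finset.mem_image.1 hmem
    exact hg.2 b hb (hba ▸ ha)
  have minj : ∀ {s s' : S}, (ψ s).1 = (ψ s').1 → s = s' :=
    fun h => ψ.injective (Subtype.ext h)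
  have hzero : ∀ {s s' : S}, X.tr s 0 s' → s' = s :=
    fun h => STS.det14 hce h (hel _)
  -- basic transfer facts
  have fwd1 : ∀ {s s' : S} {α : Multiset A}, X.tr s α s' →
      N.Enabled (ψ s).1 α ∧ (ψ s').1 = N.fire (ψ s).1 α :=
    fun h => (htr _ _ _).1 (Or.inl h)
  have fwd2 : ∀ {s s' : S} {α : Multiset A}, X.tr s' α s →
      N.Enabled (ψ s).1 (α.map bar) ∧ (ψ s').1 = N.fire (ψ s).1 (α.map bar) :=
    fun h => (htr _ _ _).1 (Or.inr ⟨_, rfl, h⟩)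
  have bwd : ∀ {s : S} {α : Multiset A}, N.Enabled (ψ s).1 α →
      ∃ s', (X.tr s α s' ∨ ∃ β, α = Multiset.map bar β ∧ X.tr s' β s) ∧
        (ψ s').1 = N.fire (ψ s).1 α := by
    intro s α hEn
    let M' : {M : Fin n → ℕ // N.Reach M} := ⟨N.fire (ψ s).1 α, PTNet.Reach.step (ψ s).2 hEn⟩
    refine ⟨ψ.symm M', ?_, ?_⟩
    · have := (htr s α (ψ.symm M')).2 ⟨hEn, by simp [M']⟩
      exact this
    · simp [M']
  -- the net for X
  let N1 : PTNet (Fin n) A :=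
    ⟨X.T, N.pre, N.post, N.M0, fun a ha => N.pre_pos a (hTsub ha)⟩
  have reach1_of : ∀ s, N1.Reach (ψ s).1 := by
    suffices h : ∀ t, X.ReachFrom X.init t → N1.Reach (ψ t).1 from fun s => h s (hrea s)
    intro t ht
    induction ht with
    | refl => exact hm0 ▸ PTNet.Reach.init
    | @step u u' α hre ht' ih =>
      obtain ⟨hEn, hfire⟩ := fwd1 ht'
      have hEn1 : N1.Enabled (ψ u).1 α := ⟨fun a ha => hlab _ _ _ ht' a ha, hEn.2⟩
      exact hfire ▸ PTNet.Reach.step ih hEn1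
  have reach1_to : ∀ M, N1.Reach M → ∃ s, (ψ s).1 = M := by
    intro M hM
    induction hM with
    | init => exact ⟨X.init, hm0⟩
    | @step M α hre hEn ih =>
      obtain ⟨s, rfl⟩ := ih
      have hEnN : N.Enabled (ψ s).1 α := ⟨fun a ha => hTsub (hEn.1 a ha), hEn.2⟩
      obtain ⟨s', _, hfire⟩ := bwd hEnN
      exact ⟨s', hfire⟩
  let e1 : S ≃ {M : Fin n → ℕ // N1.Reach M} :=
    Equiv.ofBijective (fun s => ⟨(ψ s).1, reach1_of s⟩)
      ⟨fun s s' h => by have h2 := congrArg Subtype.val h; exact minj h2,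
       fun M => by obtain ⟨s, hs⟩ := reach1_to M.1 M.2; exact ⟨s, Subtype.ext hs⟩⟩
  have sol1 : STSSolvable X := by
    refine ⟨n, N1, e1, Subtype.ext hm0, rfl, ?_⟩
    intro s α s'
    constructor
    · intro h
      obtain ⟨hEn, hf⟩ := fwd1 h
      exact ⟨⟨fun a ha => hlab _ _ _ h a ha, hEn.2⟩, hf⟩
    · rintro ⟨hEn1, hf⟩
      have hEnN : N.Enabled (ψ s).1 α := ⟨fun a ha => hTsub (hEn1.1 a ha), hEn1.2⟩
      obtain ⟨s'', hcase, hfire⟩ := bwd hEnN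
      have hss : s'' = s' := minj (hfire.trans hf.symm)
      subst hss
      rcases hcase with h | ⟨β, hβ, h2⟩
      · exact h
      · -- α is both over T and over image bar T, hence empty
        have hα0 : α = 0 := by
          by_contra hne
          obtain ⟨a, ha⟩ := Multiset.exists_mem_of_ne_zero hne
          have h1 : a ∈ X.T := hEn1.1 a ha
          have h2' : a ∈ X.T.image bar := by
            rw [hβ] at ha
            obtain ⟨b, hb, rfl⟩ := Multiset.mem_map.1 ha
            exact Finset.mem_image_of_mem bar (hlab _ _ _ h2 b hb)
          exact hdisj a h1 h2'
        subst hα0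
        have hβ0 : β = 0 := by
          have := hβ.symm
          rwa [Multiset.map_eq_zero] at this
        subst hβ0
        have : s = s'' := hzero h2
        rw [this]
        exact hel s''
  -- the net for revRestrict
  let N2 : PTNet (Fin n) A :=
    ⟨X.T.image bar, N.pre, N.post, (ψ r).1, fun a ha => N.pre_pos a (hTbar ha)⟩
  have reach2_of : ∀ s, N2.Reach (ψ s).1 := by
    have helper : ∀ (s t : S), X.ReachFrom s t → N2.Reach (ψ t).1 → N2.Reach (ψ s).1 := by
      intro s t h
      induction h with
      | refl => exact id
      | @step u u' α hre ht' ih =>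
        intro hM
        obtain ⟨hEn, hfire⟩ := fwd2 ht'
        have hEn2 : N2.Enabled (ψ u').1 (α.map bar) := by
          refine ⟨fun a ha => ?_, hEn.2⟩
          obtain ⟨b, hb, rfl⟩ := Multiset.mem_map.1 ha
          exact Finset.mem_image_of_mem bar (hlab _ _ _ ht' b hb)
        exact ih (hfire ▸ PTNet.Reach.step hM hEn2)
    intro s
    exact helper s r (hr s) PTNet.Reach.init
  have reach2_to : ∀ M, N2.Reach M → ∃ s, (ψ s).1 = M := by
    intro M hM
    induction hM with
    | init => exact ⟨r, rfl⟩
    | @step M α hre hEn ih =>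
      obtain ⟨s, rfl⟩ := ih
      have hEnN : N.Enabled (ψ s).1 α := ⟨fun a ha => hTbar (hEn.1 a ha), hEn.2⟩
      obtain ⟨s', _, hfire⟩ := bwd hEnN
      exact ⟨s', hfire⟩
  let e2 : {s : S // X.ReachFrom s r} ≃ {M : Fin n → ℕ // N2.Reach M} :=
    Equiv.ofBijective (fun s => ⟨(ψ s.1).1, reach2_of s.1⟩)
      ⟨fun s s' h => by have h2 := congrArg Subtype.val h; exact Subtype.ext (minj h2),
       fun M => by
        obtain ⟨s, hs⟩ := reach2_to M.1 M.2
        exact ⟨⟨s, hr s⟩, Subtype.ext hs⟩⟩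
  have sol2 : STSSolvable (X.revRestrict bar r) := by
    refine ⟨n, N2, e2, Subtype.ext rfl, rfl, ?_⟩
    intro u γ v
    constructor
    · rintro ⟨α, rfl, h⟩
      obtain ⟨hEn, hf⟩ := fwd2 h
      refine ⟨⟨fun a ha => ?_, hEn.2⟩, hf⟩
      obtain ⟨b, hb, rfl⟩ := Multiset.mem_map.1 ha
      exact Finset.mem_image_of_mem bar (hlab _ _ _ h b hb)
    · rintro ⟨hEn2, hf⟩
      have hEnN : N.Enabled (ψ u.1).1 γ := ⟨fun a ha => hTbar (hEn2.1 a ha), hEn2.2⟩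
      obtain ⟨s'', hcase, hfire⟩ := bwd hEnN
      have hsv : s'' = v.1 := minj (hfire.trans hf.symm)
      rcases hcase with h | ⟨β, hβ, h2⟩
      · -- γ over T̄ and over T, hence empty
        have hγ0 : γ = 0 := by
          by_contra hne
          obtain ⟨a, ha⟩ := Multiset.exists_mem_of_ne_zero hne
          exact hdisj a (hlab _ _ _ h a ha) (hEn2.1 a ha)
        subst hγ0
        have huv : s'' = u.1 := hzero h
        refine ⟨0, by simp, ?_⟩
        rw [← hsv, huv]
        exact hel u.1
      · exact ⟨β, hβ, hsv ▸ h2⟩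
  exact ⟨sol1, sol2⟩

end Stmt14B

section Stmt14C

open STS PTNet

variable {S A : Type*} [DecidableEq A]

set_option linter.unusedSectionVars false

noncomputable def unbar14 (T : Finset A) (bar : A → A) (b : A) : A :=
  if h : ∃ a ∈ T, bar a = b then h.choose else b

lemma unbar14_mem {T : Finset A} {bar : A → A} {b : A} (h : b ∈ T.image bar) :
    unbar14 T bar b ∈ T ∧ bar (unbar14 T bar b) = b := by
  obtain ⟨a, ha, rfl⟩ := Finset.mem_image.1 h
  have hex : ∃ a' ∈ T, bar a' = bar a := ⟨a, ha, rfl⟩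
  rw [unbar14, dif_pos hex]
  exact ⟨hex.choose_spec.1, hex.choose_spec.2⟩

lemma unbar14_bar {T : Finset A} {bar : A → A} (hinj : Set.InjOn bar ↑T) {a : A}
    (ha : a ∈ T) : unbar14 T bar (bar a) = a := by
  have h := unbar14_mem (T := T) (bar := bar) (Finset.mem_image_of_mem bar ha)
  exact hinj h.1 ha h.2

abbrev Places14 (T : Finset A) (n1 n2 : ℕ) : Type _ :=
  (Fin n1 ⊕ Fin n2) ⊕ ({a : A // a ∈ T} × {a : A // a ∈ T})

def combMark14 {n1 n2 : ℕ} (T : Finset A) (m1 : Fin n1 → ℕ) (m2 : Fin n2 → ℕ) :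
    Places14 T n1 n2 → ℕ
  | .inl (.inl p) => m1 p
  | .inl (.inr p) => m2 p
  | .inr _ => 1

noncomputable def combNet14 (T : Finset A) (bar : A → A) {n1 n2 : ℕ}
    (N1 : PTNet (Fin n1) A) (N2 : PTNet (Fin n2) A)
    (M10 : Fin n1 → ℕ) (M20 : Fin n2 → ℕ) : PTNet (Places14 T n1 n2) A where
  T := T ∪ T.image bar
  pre q c :=
    match q with
    | .inl (.inl p) => if c ∈ T then N1.pre p c
        else if c ∈ T.image bar then N1.post (unbar14 T bar c) p else 0
    | .inl (.inr p) => if c ∈ T then N2.post (bar c) p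
        else if c ∈ T.image bar then N2.pre p c else 0
    | .inr ab => if c = ab.1.1 ∨ c = bar ab.2.1 then 1 else 0
  post c q :=
    match q with
    | .inl (.inl p) => if c ∈ T then N1.post c p
        else if c ∈ T.image bar then N1.pre p (unbar14 T bar c) else 0
    | .inl (.inr p) => if c ∈ T then N2.pre p (bar c)
        else if c ∈ T.image bar then N2.post c p else 0
    | .inr ab => if c = ab.1.1 ∨ c = bar ab.2.1 then 1 else 0
  M0 := combMark14 T M10 M20
  pre_pos := by
    intro c hc
    rcases Finset.mem_union.1 hc with h | h
    · exact ⟨.inr (⟨c, h⟩, ⟨c, h⟩), by simp⟩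
    · obtain ⟨a, ha, rfl⟩ := Finset.mem_image.1 h
      exact ⟨.inr (⟨a, ha⟩, ⟨a, ha⟩), by simp⟩

variable {T : Finset A} {bar : A → A} {n1 n2 : ℕ} {N1 : PTNet (Fin n1) A}
  {N2 : PTNet (Fin n2) A} {M10 : Fin n1 → ℕ} {M20 : Fin n2 → ℕ}

lemma combNet14_PRE_fwd1 {α : Multiset A} (hα : ∀ c ∈ α, c ∈ T) (p : Fin n1) :
    (combNet14 T bar N1 N2 M10 M20).PRE α (.inl (.inl p)) = N1.PRE α p := by
  unfold PTNet.PRE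
  refine congrArg Multiset.sum (Multiset.map_congr rfl fun c hc => ?_)
  have h0 : (combNet14 T bar N1 N2 M10 M20).pre (.inl (.inl p)) c
      = if c ∈ T then N1.pre p c
        else if c ∈ T.image bar then N1.post (unbar14 T bar c) p else 0 := rfl
  rw [h0, if_pos (hα c hc)]

lemma combNet14_PRE_fwd2 {α : Multiset A} (hα : ∀ c ∈ α, c ∈ T) (p : Fin n2) :
    (combNet14 T bar N1 N2 M10 M20).PRE α (.inl (.inr p))
      = N2.POST (Multiset.map bar α) p := by
  unfold PTNet.PRE PTNet.POST
  rw [Multiset.map_map]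
  refine congrArg Multiset.sum (Multiset.map_congr rfl fun c hc => ?_)
  have h0 : (combNet14 T bar N1 N2 M10 M20).pre (.inl (.inr p)) c
      = if c ∈ T then N2.post (bar c) p
        else if c ∈ T.image bar then N2.pre p c else 0 := rfl
  rw [h0, if_pos (hα c hc)]
  rfl

lemma combNet14_POST_fwd1 {α : Multiset A} (hα : ∀ c ∈ α, c ∈ T) (p : Fin n1) :
    (combNet14 T bar N1 N2 M10 M20).POST α (.inl (.inl p)) = N1.POST α p := by
  unfold PTNet.POST
  refine congrArg Multiset.sum (Multiset.map_congr rfl fun c hc => ?_)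
  have h0 : (combNet14 T bar N1 N2 M10 M20).post c (.inl (.inl p))
      = if c ∈ T then N1.post c p
        else if c ∈ T.image bar then N1.pre p (unbar14 T bar c) else 0 := rfl
  rw [h0, if_pos (hα c hc)]

lemma combNet14_POST_fwd2 {α : Multiset A} (hα : ∀ c ∈ α, c ∈ T) (p : Fin n2) :
    (combNet14 T bar N1 N2 M10 M20).POST α (.inl (.inr p))
      = N2.PRE (Multiset.map bar α) p := by
  unfold PTNet.POST PTNet.PRE
  rw [Multiset.map_map]
  refine congrArg Multiset.sum (Multiset.map_congr rfl fun c hc => ?_)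
  have h0 : (combNet14 T bar N1 N2 M10 M20).post c (.inl (.inr p))
      = if c ∈ T then N2.pre p (bar c)
        else if c ∈ T.image bar then N2.post c p else 0 := rfl
  rw [h0, if_pos (hα c hc)]
  rfl

lemma combNet14_PRE_rev1 (hinj : Set.InjOn bar ↑T) (hbar : ∀ a ∈ T, bar a ∉ T)
    {α : Multiset A} (hα : ∀ c ∈ α, c ∈ T) (p : Fin n1) :
    (combNet14 T bar N1 N2 M10 M20).PRE (Multiset.map bar α) (.inl (.inl p))
      = N1.POST α p := by
  unfold PTNet.PRE PTNet.POST
  rw [Multiset.map_map]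
  refine congrArg Multiset.sum (Multiset.map_congr rfl fun c hc => ?_)
  have h1 : bar c ∉ T := hbar c (hα c hc)
  have h2 : bar c ∈ T.image bar := Finset.mem_image_of_mem bar (hα c hc)
  have h0 : (combNet14 T bar N1 N2 M10 M20).pre (.inl (.inl p)) ((fun x => bar x) c)
      = if bar c ∈ T then N1.pre p (bar c)
        else if bar c ∈ T.image bar then N1.post (unbar14 T bar (bar c)) p else 0 := rfl
  show (combNet14 T bar N1 N2 M10 M20).pre (.inl (.inl p)) ((fun x => bar x) c)
      = N1.post c p
  rw [h0, if_neg h1, if_pos h2, unbar14_bar hinj (hα c hc)]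

lemma combNet14_POST_rev1 (hinj : Set.InjOn bar ↑T) (hbar : ∀ a ∈ T, bar a ∉ T)
    {α : Multiset A} (hα : ∀ c ∈ α, c ∈ T) (p : Fin n1) :
    (combNet14 T bar N1 N2 M10 M20).POST (Multiset.map bar α) (.inl (.inl p))
      = N1.PRE α p := by
  unfold PTNet.PRE PTNet.POST
  rw [Multiset.map_map]
  refine congrArg Multiset.sum (Multiset.map_congr rfl fun c hc => ?_)
  have h1 : bar c ∉ T := hbar c (hα c hc)
  have h2 : bar c ∈ T.image bar := Finset.mem_image_of_mem bar (hα c hc)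
  have h0 : (combNet14 T bar N1 N2 M10 M20).post ((fun x => bar x) c) (.inl (.inl p))
      = if bar c ∈ T then N1.post (bar c) p
        else if bar c ∈ T.image bar then N1.pre p (unbar14 T bar (bar c)) else 0 := rfl
  show (combNet14 T bar N1 N2 M10 M20).post ((fun x => bar x) c) (.inl (.inl p))
      = N1.pre p c
  rw [h0, if_neg h1, if_pos h2, unbar14_bar hinj (hα c hc)]

lemma combNet14_PRE_rev2 {γ : Multiset A}
    (hγ : ∀ c ∈ γ, c ∉ T ∧ c ∈ T.image bar) (p : Fin n2) :
    (combNet14 T bar N1 N2 M10 M20).PRE γ (.inl (.inr p)) = N2.PRE γ p := by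
  unfold PTNet.PRE
  refine congrArg Multiset.sum (Multiset.map_congr rfl fun c hc => ?_)
  have h0 : (combNet14 T bar N1 N2 M10 M20).pre (.inl (.inr p)) c
      = if c ∈ T then N2.post (bar c) p
        else if c ∈ T.image bar then N2.pre p c else 0 := rfl
  rw [h0, if_neg (hγ c hc).1, if_pos (hγ c hc).2]

lemma combNet14_POST_rev2 {γ : Multiset A}
    (hγ : ∀ c ∈ γ, c ∉ T ∧ c ∈ T.image bar) (p : Fin n2) :
    (combNet14 T bar N1 N2 M10 M20).POST γ (.inl (.inr p)) = N2.POST γ p := by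
  unfold PTNet.POST
  refine congrArg Multiset.sum (Multiset.map_congr rfl fun c hc => ?_)
  have h0 : (combNet14 T bar N1 N2 M10 M20).post c (.inl (.inr p))
      = if c ∈ T then N2.pre p (bar c)
        else if c ∈ T.image bar then N2.post c p else 0 := rfl
  rw [h0, if_neg (hγ c hc).1, if_pos (hγ c hc).2]

lemma combNet14_PRE_loop {ab : {a : A // a ∈ T} × {a : A // a ∈ T}}
    (hne : ab.1.1 ≠ bar ab.2.1) (α : Multiset A) :
    (combNet14 T bar N1 N2 M10 M20).PRE α (.inr ab)
      = α.count ab.1.1 + α.count (bar ab.2.1) :=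
  sum_ite_pair14 α hne

lemma combNet14_POST_loop {ab : {a : A // a ∈ T} × {a : A // a ∈ T}}
    (hne : ab.1.1 ≠ bar ab.2.1) (α : Multiset A) :
    (combNet14 T bar N1 N2 M10 M20).POST α (.inr ab)
      = α.count ab.1.1 + α.count (bar ab.2.1) :=
  sum_ite_pair14 α hne

end Stmt14C

section Stmt14D

open STS PTNet

variable {S A : Type*} [DecidableEq A]

set_option linter.unusedSectionVars false
set_option maxHeartbeats 1000000

lemma stmt14_backward (X : STS S A) (bar : A → A) (hX : X.IsCEST)
    (hset : ∀ s (α : Multiset A) s', X.tr s α s' → α.Nodup)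
    (hg : X.GoodRev bar) (r : S) (hr : ∀ s, X.ReachFrom s r)
    (h1 : STSSolvable X) (h2 : STSSolvable (X.revRestrict bar r)) :
    STSSolvable (X.revSTS bar) := by
  classical
  obtain ⟨hlab, hce, hrea, hel, -⟩ := hX
  obtain ⟨n1, N1, e1, hinit1, hT1, htr1⟩ := h1
  obtain ⟨n2, N2, e2, hinit2, hT2, htr2⟩ := h2
  have hbar' : ∀ a ∈ X.T, bar a ∉ X.T := hg.2
  have hinj : Set.InjOn bar ↑X.T := hg.1
  have hT1' : X.T = N1.T := hT1
  have hT2' : Finset.image bar X.T = N2.T := hT2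
  have hdisj : ∀ c ∈ X.T, c ∉ X.T.image bar := by
    intro c hc hmem
    obtain ⟨b, hb, hbc⟩ := Finset.mem_image.1 hmem
    exact hbar' b hb (hbc ▸ hc)
  -- surjectivity helpers
  have sur1 : ∀ (s : S) (α : Multiset A), N1.Enabled (e1 s).1 α →
      ∃ s', X.tr s α s' ∧ (e1 s').1 = N1.fire (e1 s).1 α := by
    intro s α hEn
    let M' : {M : Fin n1 → ℕ // N1.Reach M} :=
      ⟨N1.fire (e1 s).1 α, PTNet.Reach.step (e1 s).2 hEn⟩
    refine ⟨e1.symm M', ?_, by simp [M']⟩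
    exact (htr1 s α (e1.symm M')).2 ⟨hEn, by simp [M']⟩
  have sur2 : ∀ (s : S) (γ : Multiset A), N2.Enabled (e2 ⟨s, hr s⟩).1 γ →
      ∃ s' α, γ = Multiset.map bar α ∧ X.tr s' α s ∧
        (e2 ⟨s', hr s'⟩).1 = N2.fire (e2 ⟨s, hr s⟩).1 γ := by
    intro s γ hEn
    let M' : {M : Fin n2 → ℕ // N2.Reach M} :=
      ⟨N2.fire (e2 ⟨s, hr s⟩).1 γ, PTNet.Reach.step (e2 ⟨s, hr s⟩).2 hEn⟩
    have h := (htr2 ⟨s, hr s⟩ γ (e2.symm M')).2 ⟨hEn, by simp [M']⟩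
    obtain ⟨α, hγ, ht⟩ := h
    refine ⟨(e2.symm M').1, α, hγ, ht, ?_⟩
    have he : (⟨(e2.symm M').1, hr _⟩ : {s : S // X.ReachFrom s r}) = e2.symm M' :=
      Subtype.ext rfl
    rw [he]
    simp [M']
  -- key forward transfer
  have keyF : ∀ {s s' : S} {α : Multiset A}, X.tr s α s' →
      (combNet14 X.T bar N1 N2 (e1 X.init).1 (e2 ⟨X.init, hr X.init⟩).1).Enabled
        (combMark14 X.T (e1 s).1 (e2 ⟨s, hr s⟩).1) α ∧
      (combMark14 X.T (e1 s').1 (e2 ⟨s', hr s'⟩).1)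
        = (combNet14 X.T bar N1 N2 (e1 X.init).1 (e2 ⟨X.init, hr X.init⟩).1).fire
            (combMark14 X.T (e1 s).1 (e2 ⟨s, hr s⟩).1) α := by
    intro s s' α ht
    have hα : ∀ c ∈ α, c ∈ X.T := hlab _ _ _ ht
    have hnd : α.Nodup := hset _ _ _ ht
    obtain ⟨hEn1, hf1⟩ := (htr1 s α s').1 ht
    obtain ⟨hEn2, hf2⟩ := (htr2 ⟨s', hr s'⟩ (Multiset.map bar α) ⟨s, hr s⟩).1 ⟨α, rfl, ht⟩
    constructor
    · refine ⟨fun c hc => Finset.mem_union_left _ (hα c hc), ?_⟩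
      intro q
      rcases q with (p | p) | ab
      · rw [combNet14_PRE_fwd1 hα]
        exact hEn1.2 p
      · rw [combNet14_PRE_fwd2 hα]
        have h5 := congrFun hf2 p
        have h6 := hEn2.2 p
        simp only [PTNet.fire] at h5
        show N2.POST (Multiset.map bar α) p ≤ (e2 ⟨s, hr s⟩).1 p
        omega
      · have hne : ab.1.1 ≠ bar ab.2.1 := fun h => hbar' ab.2.1 ab.2.2 (h ▸ ab.1.2)
        rw [combNet14_PRE_loop hne]
        have hc1 : α.count ab.1.1 ≤ 1 := Multiset.nodup_iff_count_le_one.1 hnd _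
        have hc2 : α.count (bar ab.2.1) = 0 :=
          Multiset.count_eq_zero.2 fun hm => hbar' ab.2.1 ab.2.2 (hα _ hm)
        show _ ≤ (1 : ℕ)
        omega
    · funext q
      rcases q with (p | p) | ab
      · show (e1 s').1 p = combMark14 X.T (e1 s).1 (e2 ⟨s, hr s⟩).1 (.inl (.inl p))
            - (combNet14 X.T bar N1 N2 (e1 X.init).1 (e2 ⟨X.init, hr X.init⟩).1).PRE α (.inl (.inl p))
            + (combNet14 X.T bar N1 N2 (e1 X.init).1 (e2 ⟨X.init, hr X.init⟩).1).POST α (.inl (.inl p))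
        rw [combNet14_PRE_fwd1 hα, combNet14_POST_fwd1 hα]
        exact congrFun hf1 p
      · show (e2 ⟨s', hr s'⟩).1 p = combMark14 X.T (e1 s).1 (e2 ⟨s, hr s⟩).1 (.inl (.inr p))
            - (combNet14 X.T bar N1 N2 (e1 X.init).1 (e2 ⟨X.init, hr X.init⟩).1).PRE α (.inl (.inr p))
            + (combNet14 X.T bar N1 N2 (e1 X.init).1 (e2 ⟨X.init, hr X.init⟩).1).POST α (.inl (.inr p))
        rw [combNet14_PRE_fwd2 hα, combNet14_POST_fwd2 hα]
        have h5 := congrFun hf2 p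
        have h6 := hEn2.2 p
        simp only [PTNet.fire] at h5
        show (e2 ⟨s', hr s'⟩).1 p = (e2 ⟨s, hr s⟩).1 p
            - N2.POST (Multiset.map bar α) p + N2.PRE (Multiset.map bar α) p
        omega
      · have hne : ab.1.1 ≠ bar ab.2.1 := fun h => hbar' ab.2.1 ab.2.2 (h ▸ ab.1.2)
        show (1 : ℕ) = combMark14 X.T (e1 s).1 (e2 ⟨s, hr s⟩).1 (.inr ab)
            - (combNet14 X.T bar N1 N2 (e1 X.init).1 (e2 ⟨X.init, hr X.init⟩).1).PRE α (.inr ab)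
            + (combNet14 X.T bar N1 N2 (e1 X.init).1 (e2 ⟨X.init, hr X.init⟩).1).POST α (.inr ab)
        rw [combNet14_PRE_loop hne, combNet14_POST_loop hne]
        have hc1 : α.count ab.1.1 ≤ 1 := Multiset.nodup_iff_count_le_one.1 (hset _ _ _ ht) _
        have hc2 : α.count (bar ab.2.1) = 0 :=
          Multiset.count_eq_zero.2 fun hm => hbar' ab.2.1 ab.2.2 (hα _ hm)
        show (1 : ℕ) = 1 - _ + _
        omega
  -- key reverse transfer
  have keyR : ∀ {s s' : S} {α : Multiset A}, X.tr s' α s →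
      (combNet14 X.T bar N1 N2 (e1 X.init).1 (e2 ⟨X.init, hr X.init⟩).1).Enabled
        (combMark14 X.T (e1 s).1 (e2 ⟨s, hr s⟩).1) (Multiset.map bar α) ∧
      (combMark14 X.T (e1 s').1 (e2 ⟨s', hr s'⟩).1)
        = (combNet14 X.T bar N1 N2 (e1 X.init).1 (e2 ⟨X.init, hr X.init⟩).1).fire
            (combMark14 X.T (e1 s).1 (e2 ⟨s, hr s⟩).1) (Multiset.map bar α) := by
    intro s s' α ht
    have hα : ∀ c ∈ α, c ∈ X.T := hlab _ _ _ ht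
    have hnd : α.Nodup := hset _ _ _ ht
    have hndb : (Multiset.map bar α).Nodup :=
      hnd.map_on fun x hx y hy hxy => hinj (hα x hx) (hα y hy) hxy
    obtain ⟨hEn1, hf1⟩ := (htr1 s' α s).1 ht
    obtain ⟨hEn2, hf2⟩ := (htr2 ⟨s, hr s⟩ (Multiset.map bar α) ⟨s', hr s'⟩).1 ⟨α, rfl, ht⟩
    have hmembar : ∀ c ∈ Multiset.map bar α, c ∉ X.T ∧ c ∈ X.T.image bar := by
      intro c hc
      obtain ⟨b, hb, rfl⟩ := Multiset.mem_map.1 hc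
      exact ⟨hbar' b (hα b hb), Finset.mem_image_of_mem bar (hα b hb)⟩
    constructor
    · refine ⟨fun c hc => Finset.mem_union_right _ (hmembar c hc).2, ?_⟩
      intro q
      rcases q with (p | p) | ab
      · rw [combNet14_PRE_rev1 hinj hbar' hα]
        have h5 := congrFun hf1 p
        have h6 := hEn1.2 p
        simp only [PTNet.fire] at h5
        show N1.POST α p ≤ (e1 s).1 p
        omega
      · rw [combNet14_PRE_rev2 hmembar]
        exact hEn2.2 p
      · have hne : ab.1.1 ≠ bar ab.2.1 := fun h => hbar' ab.2.1 ab.2.2 (h ▸ ab.1.2)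
        rw [combNet14_PRE_loop hne]
        have hc1 : (Multiset.map bar α).count ab.1.1 = 0 :=
          Multiset.count_eq_zero.2 fun hm => (hmembar _ hm).1 ab.1.2
        have hc2 : (Multiset.map bar α).count (bar ab.2.1) ≤ 1 :=
          Multiset.nodup_iff_count_le_one.1 hndb _
        show _ ≤ (1 : ℕ)
        omega
    · funext q
      rcases q with (p | p) | ab
      · show (e1 s').1 p = combMark14 X.T (e1 s).1 (e2 ⟨s, hr s⟩).1 (.inl (.inl p))
            - (combNet14 X.T bar N1 N2 (e1 X.init).1 (e2 ⟨X.init, hr X.init⟩).1).PRE (Multiset.map bar α) (.inl (.inl p))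
            + (combNet14 X.T bar N1 N2 (e1 X.init).1 (e2 ⟨X.init, hr X.init⟩).1).POST (Multiset.map bar α) (.inl (.inl p))
        rw [combNet14_PRE_rev1 hinj hbar' hα, combNet14_POST_rev1 hinj hbar' hα]
        have h5 := congrFun hf1 p
        have h6 := hEn1.2 p
        simp only [PTNet.fire] at h5
        show (e1 s').1 p = (e1 s).1 p - N1.POST α p + N1.PRE α p
        omega
      · show (e2 ⟨s', hr s'⟩).1 p = combMark14 X.T (e1 s).1 (e2 ⟨s, hr s⟩).1 (.inl (.inr p))
            - (combNet14 X.T bar N1 N2 (e1 X.init).1 (e2 ⟨X.init, hr X.init⟩).1).PRE (Multiset.map bar α) (.inl (.inr p))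
            + (combNet14 X.T bar N1 N2 (e1 X.init).1 (e2 ⟨X.init, hr X.init⟩).1).POST (Multiset.map bar α) (.inl (.inr p))
        rw [combNet14_PRE_rev2 hmembar, combNet14_POST_rev2 hmembar]
        exact congrFun hf2 p
      · have hne : ab.1.1 ≠ bar ab.2.1 := fun h => hbar' ab.2.1 ab.2.2 (h ▸ ab.1.2)
        show (1 : ℕ) = combMark14 X.T (e1 s).1 (e2 ⟨s, hr s⟩).1 (.inr ab)
            - (combNet14 X.T bar N1 N2 (e1 X.init).1 (e2 ⟨X.init, hr X.init⟩).1).PRE (Multiset.map bar α) (.inr ab)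
            + (combNet14 X.T bar N1 N2 (e1 X.init).1 (e2 ⟨X.init, hr X.init⟩).1).POST (Multiset.map bar α) (.inr ab)
        rw [combNet14_PRE_loop hne, combNet14_POST_loop hne]
        have hc1 : (Multiset.map bar α).count ab.1.1 = 0 :=
          Multiset.count_eq_zero.2 fun hm => by
            obtain ⟨b, hb, hbc⟩ := Multiset.mem_map.1 hm
            exact hbar' b (hα b hb) (hbc ▸ ab.1.2)
        have hc2 : (Multiset.map bar α).count (bar ab.2.1) ≤ 1 :=
          Multiset.nodup_iff_count_le_one.1 hndb _
        show (1 : ℕ) = 1 - _ + _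
        omega
  -- purity of enabled steps
  have purity : ∀ {s : S} {γ : Multiset A},
      (combNet14 X.T bar N1 N2 (e1 X.init).1 (e2 ⟨X.init, hr X.init⟩).1).Enabled
        (combMark14 X.T (e1 s).1 (e2 ⟨s, hr s⟩).1) γ →
      (∀ c ∈ γ, c ∈ X.T) ∨ (∀ c ∈ γ, c ∉ X.T ∧ c ∈ X.T.image bar) := by
    intro s γ hEn
    by_cases hf : ∀ c ∈ γ, c ∈ X.T
    · exact Or.inl hf
    · push_neg at hf
      obtain ⟨c1, hc1, hc1T⟩ := hf
      have hc1i : c1 ∈ X.T.image bar :=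
        (Finset.mem_union.1 (hEn.1 c1 hc1)).resolve_left hc1T
      refine Or.inr fun c hc => ?_
      rcases Finset.mem_union.1 (hEn.1 c hc) with hcT | hci
      · exfalso
        obtain ⟨b, hb, hbc⟩ := Finset.mem_image.1 hc1i
        have hne : c ≠ bar b := fun h => hbar' b hb (h ▸ hcT)
        have h6 := hEn.2 (.inr (⟨c, hcT⟩, ⟨b, hb⟩))
        rw [combNet14_PRE_loop hne] at h6
        have h7 : 0 < γ.count c := Multiset.count_pos.2 hc
        have h8 : 0 < γ.count (bar b) := Multiset.count_pos.2 (hbc ▸ hc1)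
        have h9 : combMark14 X.T (e1 s).1 (e2 ⟨s, hr s⟩).1
            (.inr (⟨c, hcT⟩, ⟨b, hb⟩)) = 1 := rfl
        rw [h9] at h6
        have h6' : γ.count c + γ.count (bar b) ≤ 1 := h6
        omega
      · exact ⟨fun hcT => hdisj c hcT hci, hci⟩
  -- enabled pure steps come from transitions
  have getF : ∀ {s : S} {γ : Multiset A},
      (combNet14 X.T bar N1 N2 (e1 X.init).1 (e2 ⟨X.init, hr X.init⟩).1).Enabled
        (combMark14 X.T (e1 s).1 (e2 ⟨s, hr s⟩).1) γ →
      (∀ c ∈ γ, c ∈ X.T) → ∃ s', X.tr s γ s' := by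
    intro s γ hEn hfor
    have hEn1 : N1.Enabled (e1 s).1 γ := by
      refine ⟨fun c hc => ?_, fun p => ?_⟩
      · have h := hfor c hc
        rw [hT1'] at h
        exact h
      have h6 := hEn.2 (.inl (.inl p))
      rw [combNet14_PRE_fwd1 hfor] at h6
      exact h6
    obtain ⟨s', ht, -⟩ := sur1 s γ hEn1
    exact ⟨s', ht⟩
  have getR : ∀ {s : S} {γ : Multiset A},
      (combNet14 X.T bar N1 N2 (e1 X.init).1 (e2 ⟨X.init, hr X.init⟩).1).Enabled
        (combMark14 X.T (e1 s).1 (e2 ⟨s, hr s⟩).1) γ →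
      (∀ c ∈ γ, c ∉ X.T ∧ c ∈ X.T.image bar) →
      ∃ s' α, γ = Multiset.map bar α ∧ X.tr s' α s := by
    intro s γ hEn hrev
    have hEn2 : N2.Enabled (e2 ⟨s, hr s⟩).1 γ := by
      refine ⟨fun c hc => ?_, fun p => ?_⟩
      · have h := (hrev c hc).2
        rw [hT2'] at h
        exact h
      have h6 := hEn.2 (.inl (.inr p))
      rw [combNet14_PRE_rev2 hrev] at h6
      exact h6
    obtain ⟨s', α, hγ, ht, -⟩ := sur2 s γ hEn2
    exact ⟨s', α, hγ, ht⟩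
  -- reachability characterisation
  have reach_of : ∀ s : S,
      (combNet14 X.T bar N1 N2 (e1 X.init).1 (e2 ⟨X.init, hr X.init⟩).1).Reach
        (combMark14 X.T (e1 s).1 (e2 ⟨s, hr s⟩).1) := by
    suffices h : ∀ t, X.ReachFrom X.init t →
        (combNet14 X.T bar N1 N2 (e1 X.init).1 (e2 ⟨X.init, hr X.init⟩).1).Reach
          (combMark14 X.T (e1 t).1 (e2 ⟨t, hr t⟩).1) from fun s => h s (hrea s)
    intro t ht
    induction ht with
    | refl => exact PTNet.Reach.init
    | @step u u' α hre ht' ih =>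
      obtain ⟨hEn, hfire⟩ := keyF ht'
      exact hfire ▸ PTNet.Reach.step ih hEn
  have reach_to : ∀ M,
      (combNet14 X.T bar N1 N2 (e1 X.init).1 (e2 ⟨X.init, hr X.init⟩).1).Reach M →
      ∃ s, combMark14 X.T (e1 s).1 (e2 ⟨s, hr s⟩).1 = M := by
    intro M hM
    induction hM with
    | init => exact ⟨X.init, rfl⟩
    | @step M γ hre hEn ih =>
      obtain ⟨s, rfl⟩ := ih
      rcases purity hEn with hfor | hrev
      · obtain ⟨s', ht⟩ := getF hEn hfor
        exact ⟨s', (keyF ht).2.symm ▸ rfl⟩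
      · obtain ⟨s', α, hγ, ht⟩ := getR hEn hrev
        refine ⟨s', ?_⟩
        rw [hγ]
        exact (keyR ht).2
  have μinj : ∀ {s s' : S},
      combMark14 X.T (e1 s).1 (e2 ⟨s, hr s⟩).1
        = combMark14 X.T (e1 s').1 (e2 ⟨s', hr s'⟩).1 → s = s' := by
    intro s s' h
    have h1 : (e1 s).1 = (e1 s').1 := funext fun p => congrFun h (.inl (.inl p))
    exact e1.injective (Subtype.ext h1)
  let eqv : S ≃ {M : Places14 X.T n1 n2 → ℕ //
      (combNet14 X.T bar N1 N2 (e1 X.init).1 (e2 ⟨X.init, hr X.init⟩).1).Reach M} :=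
    Equiv.ofBijective (fun s => ⟨combMark14 X.T (e1 s).1 (e2 ⟨s, hr s⟩).1, reach_of s⟩)
      ⟨fun s s' h => by have h2 := congrArg Subtype.val h; exact μinj h2,
       fun M => by obtain ⟨s, hs⟩ := reach_to M.1 M.2; exact ⟨s, Subtype.ext hs⟩⟩
  have iso : (X.revSTS bar).IsoSTS
      (CRG (combNet14 X.T bar N1 N2 (e1 X.init).1 (e2 ⟨X.init, hr X.init⟩).1)) := by
    refine ⟨eqv, Subtype.ext rfl, rfl, ?_⟩
    intro s γ s'
    constructor
    · rintro (ht | ⟨α, rfl, ht⟩)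
      · exact keyF ht
      · exact keyR ht
    · rintro ⟨hEn, hf⟩
      have hf' : combMark14 X.T (e1 s').1 (e2 ⟨s', hr s'⟩).1
          = (combNet14 X.T bar N1 N2 (e1 X.init).1 (e2 ⟨X.init, hr X.init⟩).1).fire
              (combMark14 X.T (e1 s).1 (e2 ⟨s, hr s⟩).1) γ := hf
      rcases purity hEn with hfor | hrev
      · obtain ⟨s'', ht⟩ := getF hEn hfor
        have h9 := (keyF ht).2
        have hss : s'' = s' := μinj (h9.trans hf'.symm)
        exact Or.inl (hss ▸ ht)
      · obtain ⟨s'', α, hγ, ht⟩ := getR hEn hrev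
        have h9 := (keyR ht).2
        rw [← hγ] at h9
        have hss : s'' = s' := μinj (h9.trans hf'.symm)
        exact Or.inr ⟨α, hγ, hss ▸ ht⟩
  exact solvable_of_iso_fin14 _ _ iso

end Stmt14D

/-- For a set CEST-system with home state `r`, `TS^rev` is solvable iff both
`TS` and `TS̄_r` are solvable. -/
theorem stmt14 {S A : Type*} [DecidableEq A] (X : STS S A) (bar : A → A)
    (hX : X.IsCEST)
    (hset : ∀ s (α : Multiset A) s', X.tr s α s' → α.Nodup)
    (hg : X.GoodRev bar)
    (r : S) (hr : ∀ s, X.ReachFrom s r) :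
    STSSolvable (X.revSTS bar) ↔
      (STSSolvable X ∧ STSSolvable (X.revRestrict bar r)) := by
  constructor
  · intro h
    exact stmt14_forward X bar hX hg r hr h
  · rintro ⟨h1, h2⟩
    exact stmt14_backward X bar hX hset hg r hr h1 h2
end

section
/- Let TS=(S,T,→,s₀) be a CEST-system and N=(P,T⊎T̄,F,M₀) a PT-net satisfying (TS^spike)^rev ◁ CRG_N ◁ TS^mixrev and TS ≅ CRG_{N|_T}. Then there exists a PT-net N'=(P,T⊎T̄,F',M₀) satisfying the same two conditions and such that, in addition, PRE_{N'}(ā) ≥ POST_{N'}(a) and POST_{N'}(ā) ≥ PRE_{N'}(a) for every a ∈ T. -/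
section Aux

open STS Multiset

variable {S A : Type*} [DecidableEq A] {X : STS S A} {bar : A → A}

lemma tr_det (hCE : X.CE) {s γ s' s''} (h1 : X.tr s γ s') (h2 : X.tr s γ s'') :
    s' = s'' :=
  hCE s s' s'' _ _ (.fwd (.nil s) h1) (.fwd (.nil s) h2) (.refl _)

lemma tr_zero (hCE : X.CE) {s s'} (h : X.tr s 0 s') : s' = s := by
  have p1 : STS.PathSig X s s' (0 + STS.stepVec (0 : Multiset A)) := .fwd (.nil s) h
  have hz : (0 + STS.stepVec (0 : Multiset A) : A → ℤ) = 0 := by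
    funext b; simp [STS.stepVec]
  rw [hz] at p1
  exact hCE s s' s _ _ p1 (.nil s) (.refl _)

lemma tr_split (hCE : X.CE) (hSEQ : X.SEQ) {s s'} {α β : Multiset A}
    (h : X.tr s (α + β) s') : ∃ t, X.tr s α t ∧ X.tr t β s' := by
  obtain ⟨t, h1, t', h2⟩ := hSEQ s α β ⟨s', h⟩
  refine ⟨t, h1, ?_⟩
  have p1 : STS.PathSig X s t' ((0 + STS.stepVec α) + STS.stepVec β) :=
    .fwd (.fwd (.nil s) h1) h2
  have p2 : STS.PathSig X s s' (0 + STS.stepVec (α + β)) := .fwd (.nil s) h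
  have he : ((0 + STS.stepVec α) + STS.stepVec β : A → ℤ)
      = 0 + STS.stepVec (α + β) := by
    funext b; simp [STS.stepVec]
  rw [he] at p1
  have hts : t' = s' := hCE s t' s' _ _ p1 p2 (.refl _)
  rwa [hts] at h2

lemma mixrev_fwd (hX : X.IsCEST) (hg : X.GoodRev bar) {u v} {γ : Multiset A}
    (hγ : ∀ b ∈ γ, b ∈ X.T) (h : (X.mixrevSTS bar).tr u γ v) : X.tr u γ v := by
  obtain ⟨s, α, β, hdec, -, hα, hβ⟩ := h
  have hα0 : α = 0 := by
    by_contra h0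
    obtain ⟨a, ha⟩ := Multiset.exists_mem_of_ne_zero h0
    have haT : a ∈ X.T := hX.1 _ _ _ hα a ha
    have hbg : bar a ∈ γ := by
      rw [hdec]; exact Multiset.mem_add.2 (Or.inl (Multiset.mem_map_of_mem _ ha))
    exact hg.2 a haT (hγ _ hbg)
  subst hα0
  have hus : u = s := tr_zero hX.2.1 hα
  simp only [Multiset.map_zero, zero_add] at hdec
  rw [hus, hdec]
  exact hβ

lemma f_id_lemma (hX : X.IsCEST) (hg : X.GoodRev bar) (f : S → S)
    (hinit : f X.init = X.init)
    (htr : ∀ s (γ : Multiset A) s', ((X.spikeR).revSTS bar).tr s γ s' →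
      (X.mixrevSTS bar).tr (f s) γ (f s')) :
    ∀ s, f s = s := by
  have key : ∀ (γ : Multiset A) r r', X.tr r γ r' → f r = r → f r' = r' := by
    intro γ
    induction γ using Multiset.induction with
    | empty =>
      intro r r' h hf
      rw [tr_zero hX.2.1 h, hf]
    | cons a δ ih =>
      intro r r' h hf
      rw [← Multiset.singleton_add] at h
      obtain ⟨t, h1, h2⟩ := tr_split hX.2.1 hX.2.2.2.2 h
      have haT : a ∈ X.T := hX.1 _ _ _ h1 a (Multiset.mem_singleton_self a)
      have hsp : ((X.spikeR).revSTS bar).tr r {a} t := by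
        exact Or.inl ⟨h1, by simp⟩
      have hm := htr _ _ _ hsp
      have hfwd : X.tr (f r) {a} (f t) :=
        mixrev_fwd hX hg (by simpa using haT) hm
      rw [hf] at hfwd
      have hft : f t = t := tr_det hX.2.1 hfwd h1
      exact ih t r' h2 hft
  intro s
  induction hX.2.2.1 s with
  | refl => exact hinit
  | step hr htr' ih => exact key _ _ _ htr' ih

end Aux
namespace PTNet

variable {P A : Type*}

lemma PRE_zero (N : PTNet P A) (p : P) : N.PRE 0 p = 0 := by simp [PTNet.PRE]
lemma POST_zero (N : PTNet P A) (p : P) : N.POST 0 p = 0 := by simp [PTNet.POST]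
lemma PRE_cons (N : PTNet P A) (b : A) (δ : Multiset A) (p : P) :
    N.PRE (b ::ₘ δ) p = N.pre p b + N.PRE δ p := by simp [PTNet.PRE]
lemma POST_cons (N : PTNet P A) (b : A) (δ : Multiset A) (p : P) :
    N.POST (b ::ₘ δ) p = N.post b p + N.POST δ p := by simp [PTNet.POST]
lemma PRE_singleton (N : PTNet P A) (b : A) (p : P) :
    N.PRE {b} p = N.pre p b := by simp [PTNet.PRE]
lemma POST_singleton (N : PTNet P A) (b : A) (p : P) :
    N.POST {b} p = N.post b p := by simp [PTNet.POST]
lemma PRE_replicate (N : PTNet P A) (k : ℕ) (a : A) (p : P) :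
    N.PRE (Multiset.replicate k a) p = k * N.pre p a := by
  simp [PTNet.PRE, Multiset.map_replicate, Multiset.sum_replicate, smul_eq_mul]

lemma PRE_eq_of (N N' : PTNet P A) {γ : Multiset A} {p : P}
    (h : ∀ b ∈ γ, N.pre p b = N'.pre p b) : N.PRE γ p = N'.PRE γ p := by
  induction γ using Multiset.induction with
  | empty => simp [PRE_zero]
  | cons b δ ih =>
    rw [PRE_cons, PRE_cons, h b (Multiset.mem_cons_self b δ),
      ih fun b hb => h b (Multiset.mem_cons_of_mem hb)]

lemma POST_eq_of (N N' : PTNet P A) {γ : Multiset A} {p : P}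
    (h : ∀ b ∈ γ, N.post b p = N'.post b p) : N.POST γ p = N'.POST γ p := by
  induction γ using Multiset.induction with
  | empty => simp [POST_zero]
  | cons b δ ih =>
    rw [POST_cons, POST_cons, h b (Multiset.mem_cons_self b δ),
      ih fun b hb => h b (Multiset.mem_cons_of_mem hb)]

lemma PRE_le_of (N N' : PTNet P A) {γ : Multiset A} {p : P}
    (h : ∀ b ∈ γ, N.pre p b ≤ N'.pre p b) : N.PRE γ p ≤ N'.PRE γ p := by
  induction γ using Multiset.induction with
  | empty => simp [PRE_zero]
  | cons b δ ih =>
    rw [PRE_cons, PRE_cons]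
    exact Nat.add_le_add (h b (Multiset.mem_cons_self b δ))
      (ih fun b hb => h b (Multiset.mem_cons_of_mem hb))

lemma PRE_POST_id (N N' : PTNet P A) {γ : Multiset A} {p : P}
    (h : ∀ b ∈ γ, N'.pre p b + N.post b p = N.pre p b + N'.post b p) :
    N'.PRE γ p + N.POST γ p = N.PRE γ p + N'.POST γ p := by
  induction γ using Multiset.induction with
  | empty => simp [PRE_zero, POST_zero]
  | cons b δ ih =>
    have h1 := h b (Multiset.mem_cons_self b δ)
    have h2 := ih fun b hb => h b (Multiset.mem_cons_of_mem hb)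
    rw [PRE_cons, PRE_cons, POST_cons, POST_cons]
    omega

end PTNet
/-- The flow of the net in Theorem `th-2ba` can be assumed to satisfy
`PRE(ā) ≥ POST(a)` and `POST(ā) ≥ PRE(a)` for every action `a`. -/
theorem stmt16 {S A : Type*} [DecidableEq A] (X : STS S A) (bar : A → A)
    (hX : X.IsCEST) (hg : X.GoodRev bar)
    (n : ℕ) (N : PTNet (Fin n) A) (hT : N.T = X.revT bar)
    (h1 : STS.Incl ((X.spikeR).revSTS bar) (CRG N))
    (h2 : STS.Incl (CRG N) (X.mixrevSTS bar))
    (h3 : STS.IsoSTS X (CRG (N.restrict X.T))) :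
    ∃ N' : PTNet (Fin n) A, N'.T = N.T ∧ N'.M0 = N.M0 ∧
      STS.Incl ((X.spikeR).revSTS bar) (CRG N') ∧
      STS.Incl (CRG N') (X.mixrevSTS bar) ∧
      STS.IsoSTS X (CRG (N'.restrict X.T)) ∧
      ∀ a ∈ X.T, ∀ p : Fin n,
        N'.post a p ≤ N'.pre p (bar a) ∧ N'.pre p a ≤ N'.post (bar a) p := by
  obtain ⟨ψ₁, h1i, h1T, h1tr⟩ := h1
  obtain ⟨ψ₂, h2i, h2T, h2tr⟩ := h2
  have hLab : X.LabelsIn := hX.1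
  -- ψ₂ ∘ ψ₁ is the identity
  have hfid : ∀ s, ψ₂ (ψ₁ s) = s := by
    refine f_id_lemma hX hg (fun s => ψ₂ (ψ₁ s)) ?_ ?_
    · show ψ₂ (ψ₁ (((X.spikeR).revSTS bar)).init) = X.init
      rw [h1i]; exact h2i
    · intro s γ s' h
      exact h2tr _ _ _ (h1tr _ _ _ h)
  have hpp : ∀ M, ψ₁ (ψ₂ M) = M := fun M => ψ₂.injective (hfid (ψ₂ M))
  -- the modified net
  set pre' : Fin n → A → ℕ :=
    fun p b => N.pre p b ⊔ (X.T.filter fun a => bar a = b).sup fun a => N.post a p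
    with hpre'
  set post' : A → Fin n → ℕ :=
    fun b p => N.post b p ⊔ (X.T.filter fun a => bar a = b).sup fun a => N.pre p a
    with hpost'
  have hprele : ∀ p b, N.pre p b ≤ pre' p b := fun p b => le_sup_left
  have hpos : ∀ a ∈ N.T, ∃ p, 0 < pre' p a := by
    intro a ha
    obtain ⟨p, hp⟩ := N.pre_pos a ha
    exact ⟨p, lt_of_lt_of_le hp (hprele p a)⟩
  set N' : PTNet (Fin n) A := ⟨N.T, pre', post', N.M0, hpos⟩ with hN'
  -- basic facts about the new flow
  have hforward : ∀ b ∈ X.T,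
      (∀ p, pre' p b = N.pre p b) ∧ (∀ p, post' b p = N.post b p) := by
    intro b hb
    have hfil : X.T.filter (fun a => bar a = b) = ∅ := by
      refine Finset.filter_eq_empty_iff.2 ?_
      intro a ha hba
      exact hg.2 a ha (hba ▸ hb)
    constructor <;> intro p <;> simp [hpre', hpost', hfil]
  have hfilter_bar : ∀ a ∈ X.T, (X.T.filter fun a' => bar a' = bar a) = {a} := by
    intro a ha
    ext a'
    simp only [Finset.mem_filter, Finset.mem_singleton]
    exact ⟨fun ⟨h1, h2⟩ => hg.1 h1 ha h2, fun h => by subst h; exact ⟨ha, rfl⟩⟩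
  have hbarpre : ∀ a ∈ X.T, ∀ p, pre' p (bar a) = N.pre p (bar a) ⊔ N.post a p := by
    intro a ha p
    simp [hpre', hfilter_bar a ha]
  have hbarpost : ∀ a ∈ X.T, ∀ p, post' (bar a) p = N.post (bar a) p ⊔ N.pre p a := by
    intro a ha p
    simp [hpost', hfilter_bar a ha]
  -- effect identity for occurring actions
  have occ_eff : ∀ a ∈ X.T, (∃ s : S, ∃ γ : Multiset A, ∃ s' : S, X.tr s γ s' ∧ a ∈ γ) →
      ∀ p, N.post a p + N.post (bar a) p = N.pre p a + N.pre p (bar a) := by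
    rintro a ha ⟨s, γ, s', htr0, hmem⟩ p
    rw [show γ = {a} + γ.erase a by
      rw [Multiset.singleton_add, Multiset.cons_erase hmem]] at htr0
    obtain ⟨t, hat, -⟩ := tr_split hX.2.1 hX.2.2.2.2 htr0
    have hsp : (X.spikeR).tr s {a} t := ⟨hat, by simp⟩
    obtain ⟨⟨-, hen1⟩, hf1⟩ := h1tr _ _ _ (Or.inl hsp)
    obtain ⟨⟨-, hen2⟩, hf2⟩ :=
      h1tr _ _ _ (Or.inr ⟨{a}, (Multiset.map_singleton bar a).symm, hsp⟩)
    have e1 := congrFun hf1 p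
    have e2 := congrFun hf2 p
    have hp1 := hen1 p
    have hp2 := hen2 p
    simp only [PTNet.fire, PTNet.PRE_singleton, PTNet.POST_singleton] at e1 e2 hp1 hp2
    omega
  -- identity for the bar of an occurring action
  have bar_id : ∀ a ∈ X.T, (∃ s : S, ∃ γ : Multiset A, ∃ s' : S, X.tr s γ s' ∧ a ∈ γ) →
      ∀ p, pre' p (bar a) + N.post (bar a) p = N.pre p (bar a) + post' (bar a) p := by
    intro a ha hocc p
    have hid := occ_eff a ha hocc p
    rw [hbarpre a ha p, hbarpost a ha p]
    rcases le_total (N.post a p) (N.pre p (bar a)) with hle | hle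
    · rw [sup_eq_left.2 hle, sup_eq_left.2 (by omega)]
    · rw [sup_eq_right.2 hle, sup_eq_right.2 (by omega)]
      omega
  -- single reverse steps: marking dominates POST(a), and a occurs
  have rev_single : ∀ (M : Fin n → ℕ) (hM : N.Reach M) (a : A), a ∈ X.T →
      N.Enabled M {bar a} →
      (∀ p, N.post a p ≤ M p) ∧ (∃ s : S, ∃ γ : Multiset A, ∃ s' : S, X.tr s γ s' ∧ a ∈ γ) := by
    intro M hM a ha hen
    have hstep : (CRG N).tr ⟨M, hM⟩ {bar a} ⟨N.fire M {bar a}, hM.step hen⟩ :=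
      ⟨hen, rfl⟩
    obtain ⟨s, α, β, hdec, -, hα, hβ⟩ := h2tr _ _ _ hstep
    have hβ0 : β = 0 := by
      refine Multiset.eq_zero_of_forall_notMem fun b hb => ?_
      have hbT : b ∈ X.T := hLab _ _ _ hβ b hb
      have hbm : b ∈ ({bar a} : Multiset A) := by
        rw [hdec]; exact Multiset.mem_add.2 (Or.inr hb)
      rw [Multiset.mem_singleton] at hbm
      exact hg.2 a ha (hbm ▸ hbT)
    subst hβ0
    rw [add_zero] at hdec
    obtain ⟨a', hα1, hba⟩ := Multiset.map_eq_singleton.1 hdec.symm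
    subst hα1
    have ha'T : a' ∈ X.T := hLab _ _ _ hα a' (Multiset.mem_singleton_self a')
    have haa : a' = a := hg.1 ha'T ha hba
    subst haa
    have hsp : ((X.spikeR).revSTS bar).tr s {a'} (ψ₂ ⟨M, hM⟩) := Or.inl ⟨hα, by simp⟩
    have hc := h1tr _ _ _ hsp
    rw [hpp] at hc
    obtain ⟨⟨-, hen1⟩, hf⟩ := hc
    refine ⟨fun p => ?_, ⟨s, {a'}, _, hα, Multiset.mem_singleton_self _⟩⟩
    have e1 := congrFun hf p
    have hp1 := hen1 p
    simp only [PTNet.fire, PTNet.PRE_singleton, PTNet.POST_singleton] at e1 hp1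
    omega
  -- elementwise identity at reachable markings
  have elem_id : ∀ (M : Fin n → ℕ), N.Reach M → ∀ b, N.Enabled M {b} →
      ∀ p, pre' p b + N.post b p = N.pre p b + post' b p := by
    intro M hM b hen p
    by_cases hbX : b ∈ X.T
    · rw [(hforward b hbX).1 p, (hforward b hbX).2 p]
    · have hbT : b ∈ N.T := hen.1 b (Multiset.mem_singleton_self b)
      rw [hT] at hbT
      rcases Finset.mem_union.1 hbT with h | h
      · exact absurd h hbX
      · obtain ⟨a, ha, rfl⟩ := Finset.mem_image.1 h
        exact bar_id a ha (rev_single M hM a ha hen).2 p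
  -- enabling of single steps transfers to N'
  have enab_single : ∀ (M : Fin n → ℕ) (γ : Multiset A) b, b ∈ γ →
      N.Enabled M γ → N.Enabled M {b} := by
    rintro M γ b hb ⟨hmem, hpre⟩
    refine ⟨by simpa using hmem b hb, fun p => ?_⟩
    have hsplit : N.PRE γ p = N.pre p b + N.PRE (γ.erase b) p := by
      conv_lhs => rw [← Multiset.cons_erase hb]
      exact N.PRE_cons b _ p
    have := hpre p
    rw [PTNet.PRE_singleton]
    omega
  have enab'_single : ∀ (M : Fin n → ℕ), N.Reach M → ∀ b, N.Enabled M {b} →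
      N'.Enabled M {b} := by
    intro M hM b hen
    refine ⟨hen.1, fun p => ?_⟩
    have hp := hen.2 p
    rw [PTNet.PRE_singleton] at hp ⊢
    show pre' p b ≤ M p
    by_cases hbX : b ∈ X.T
    · rw [(hforward b hbX).1 p]; exact hp
    · have hbT : b ∈ N.T := hen.1 b (Multiset.mem_singleton_self b)
      rw [hT] at hbT
      rcases Finset.mem_union.1 hbT with h | h
      · exact absurd h hbX
      · obtain ⟨a, ha, rfl⟩ := Finset.mem_image.1 h
        rw [hbarpre a ha p]
        exact sup_le hp ((rev_single M hM a ha hen).1 p)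
  -- fire agrees on N-enabled steps that are N'-enabled
  have fire_eq : ∀ (M : Fin n → ℕ) (γ : Multiset A), N.Reach M → N.Enabled M γ →
      (∀ p, N'.PRE γ p ≤ M p) → N'.fire M γ = N.fire M γ := by
    intro M γ hM hen hle
    funext p
    have hid : ∀ b ∈ γ, N'.pre p b + N.post b p = N.pre p b + N'.post b p :=
      fun b hb => elem_id M hM b (enab_single M γ b hb hen) p
    have hsum := PTNet.PRE_POST_id N N' hid
    have h1' := hle p
    have h2' := hen.2 p
    have h3' : N.PRE γ p ≤ N'.PRE γ p :=
      PTNet.PRE_le_of N N' fun b _ => hprele p b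
    simp only [PTNet.fire]
    omega
  have enabled_of' : ∀ (M : Fin n → ℕ) (γ : Multiset A),
      N'.Enabled M γ → N.Enabled M γ := by
    rintro M γ ⟨hmem, hpre⟩
    exact ⟨hmem, fun p =>
      le_trans (PTNet.PRE_le_of N N' fun b _ => hprele p b) (hpre p)⟩
  -- reachability coincides
  have reach_mp : ∀ M, N'.Reach M → N.Reach M := by
    intro M h
    induction h with
    | init => exact PTNet.Reach.init
    | @step M γ h hen ih =>
      have henN := enabled_of' _ _ hen
      rw [show N'.fire M γ = N.fire M γ from fire_eq M γ ih henN hen.2]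
      exact ih.step henN
  have reach_seq : ∀ (γ : Multiset A) (M : Fin n → ℕ), N.Reach M → N'.Reach M →
      N.Enabled M γ → N'.Reach (N.fire M γ) := by
    intro γ
    induction γ using Multiset.induction with
    | empty =>
      intro M hM hM' hen
      have : N.fire M 0 = M := by
        funext p; simp [PTNet.fire, PTNet.PRE_zero, PTNet.POST_zero]
      rw [this]; exact hM'
    | cons b δ ih =>
      intro M hM hM' hen
      have henb : N.Enabled M {b} :=
        enab_single M _ b (Multiset.mem_cons_self b δ) hen
      have henb' := enab'_single M hM b henb
      have hfb : N'.fire M {b} = N.fire M {b} := fire_eq M {b} hM henb henb'.2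
      have hM1' : N'.Reach (N.fire M {b}) := hfb ▸ hM'.step henb'
      have hM1 : N.Reach (N.fire M {b}) := hM.step henb
      have henδ : N.Enabled (N.fire M {b}) δ := by
        refine ⟨fun a ha => hen.1 a (Multiset.mem_cons_of_mem ha), fun p => ?_⟩
        have h2' := hen.2 p
        rw [PTNet.PRE_cons] at h2'
        simp only [PTNet.fire, PTNet.PRE_singleton, PTNet.POST_singleton]
        omega
      have hres := ih (N.fire M {b}) hM1 hM1' henδ
      have hcomp : N.fire (N.fire M {b}) δ = N.fire M (b ::ₘ δ) := by
        funext p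
        have h2' := hen.2 p
        rw [PTNet.PRE_cons] at h2'
        simp only [PTNet.fire, PTNet.PRE_singleton, PTNet.POST_singleton,
          PTNet.PRE_cons, PTNet.POST_cons]
        omega
      rwa [hcomp] at hres
  have reach_mpr : ∀ M, N.Reach M → N'.Reach M := by
    intro M h
    induction h with
    | init => exact PTNet.Reach.init
    | @step M γ h hen ih => exact reach_seq γ M h ih hen
  have hre : ∀ M, N.Reach M ↔ N'.Reach M := fun M => ⟨reach_mpr M, reach_mp M⟩
  let eN : {M : Fin n → ℕ // N.Reach M} ≃ {M : Fin n → ℕ // N'.Reach M} :=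
    Equiv.subtypeEquivRight hre
  have heN : ∀ M, (eN M).1 = M.1 := fun M => rfl
  refine ⟨N', rfl, rfl, ?_, ?_, ?_, ?_⟩
  · -- spike reverse included in CRG N'
    refine ⟨ψ₁.trans eN, ?_, ?_, ?_⟩
    · apply Subtype.ext
      show (eN (ψ₁ (((X.spikeR).revSTS bar)).init)).1 = N.M0
      rw [heN, h1i]
      rfl
    · show X.revT bar ⊆ N.T
      rw [hT]
    · intro s γ s' h
      rcases h with ⟨hx, hcard⟩ | ⟨α, hdec, hxsp, hαcard⟩
      · -- forward transition
        obtain ⟨henN, hfN⟩ := h1tr _ _ _ (Or.inl ⟨hx, hcard⟩)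
        have hγT : ∀ b ∈ γ, b ∈ X.T := fun b hb => hLab _ _ _ hx b hb
        refine ⟨⟨henN.1, fun p => ?_⟩, ?_⟩
        · rw [show N'.PRE γ p = N.PRE γ p from
            (PTNet.PRE_eq_of N N' fun b hb => ((hforward b (hγT b hb)).1 p).symm).symm]
          exact henN.2 p
        · show (eN (ψ₁ s')).1 = N'.fire (eN (ψ₁ s)).1 γ
          rw [heN, heN, hfN]
          funext p
          simp only [PTNet.fire]
          rw [show N'.PRE γ p = N.PRE γ p from
            (PTNet.PRE_eq_of N N' fun b hb => ((hforward b (hγT b hb)).1 p).symm).symm,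
            show N'.POST γ p = N.POST γ p from
            (PTNet.POST_eq_of N N' fun b hb => ((hforward b (hγT b hb)).2 p).symm).symm]
      · -- reverse transition
        obtain ⟨henN, hfN⟩ := h1tr _ _ _ (Or.inr ⟨α, hdec, hxsp, hαcard⟩)
        obtain ⟨henF, hfF⟩ := h1tr _ _ _ (Or.inl ⟨hxsp, hαcard⟩)
        by_cases hα0 : α = 0
        · subst hα0
          simp only [Multiset.map_zero] at hdec
          subst hdec
          refine ⟨⟨henN.1, fun p => by rw [PTNet.PRE_zero]; exact Nat.zero_le _⟩, ?_⟩
          show (eN (ψ₁ s')).1 = N'.fire (eN (ψ₁ s)).1 0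
          rw [heN, heN, hfN]
          funext p
          simp [PTNet.fire, PTNet.PRE_zero, PTNet.POST_zero]
        · obtain ⟨a, haα⟩ := Multiset.exists_mem_of_ne_zero hα0
          have haT : a ∈ X.T := hLab _ _ _ hxsp a haα
          set k := Multiset.card α with hk
          have hrep : α = Multiset.replicate k a := by
            refine (Multiset.eq_replicate.2 ⟨hk.symm, fun b hb => ?_⟩)
            have := Finset.card_le_one.1 hαcard
            exact this b (Multiset.mem_toFinset.2 hb) a (Multiset.mem_toFinset.2 haα)
          have hγrep : γ = Multiset.replicate k (bar a) := by
            rw [hdec, hrep, Multiset.map_replicate]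
          have hocc : ∃ s : S, ∃ γ : Multiset A, ∃ s' : S, X.tr s γ s' ∧ a ∈ γ :=
            ⟨s', α, s, hxsp, haα⟩
          have hid : ∀ b ∈ γ, ∀ p,
              N'.pre p b + N.post b p = N.pre p b + N'.post b p := by
            intro b hb p
            rw [hγrep] at hb
            rw [Multiset.eq_of_mem_replicate hb]
            exact bar_id a haT hocc p
          have hpre'γ : ∀ p, N'.PRE γ p ≤ (ψ₁ s).1 p := by
            intro p
            have hb1 : N.PRE γ p ≤ (ψ₁ s).1 p := henN.2 p
            have hb2 : N.POST α p ≤ (ψ₁ s).1 p := by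
              have := congrFun hfF p
              simp only [PTNet.fire] at this
              omega
            rw [hγrep, PTNet.PRE_replicate] at hb1 ⊢
            rw [hrep, show N.POST (Multiset.replicate k a) p = k * N.post a p by
              simp [PTNet.POST, Multiset.map_replicate, Multiset.sum_replicate,
                smul_eq_mul]] at hb2
            show k * pre' p (bar a) ≤ _
            rw [hbarpre a haT p]
            rcases le_total (N.pre p (bar a)) (N.post a p) with hle | hle
            · rw [sup_eq_right.2 hle]; exact hb2
            · rw [sup_eq_left.2 hle]; exact hb1
          refine ⟨⟨henN.1, hpre'γ⟩, ?_⟩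
          show (eN (ψ₁ s')).1 = N'.fire (eN (ψ₁ s)).1 γ
          rw [heN, heN, hfN]
          funext p
          have hsum := PTNet.PRE_POST_id N N' (fun b hb => hid b hb p)
          have h1' := hpre'γ p
          have h2' := henN.2 p
          have h3' : N.PRE γ p ≤ N'.PRE γ p :=
            PTNet.PRE_le_of N N' fun b _ => hprele p b
          simp only [PTNet.fire]
          omega
  · -- CRG N' included in mixrev
    refine ⟨eN.symm.trans ψ₂, ?_, ?_, ?_⟩
    · show ψ₂ (eN.symm (CRG N').init) = (X.mixrevSTS bar).init
      have : eN.symm (CRG N').init = (CRG N).init := Subtype.ext rfl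
      rw [this]; exact h2i
    · exact h2T
    · rintro M γ M' ⟨hen', hf'⟩
      have hMN : N.Reach M.1 := reach_mp M.1 M.2
      have hM'N : N.Reach M'.1 := reach_mp M'.1 M'.2
      have henN := enabled_of' M.1 γ hen'
      have hfN : M'.1 = N.fire M.1 γ := by
        rw [hf', fire_eq M.1 γ hMN henN hen'.2]
      have hstep : (CRG N).tr ⟨M.1, hMN⟩ γ ⟨M'.1, hM'N⟩ := ⟨henN, hfN⟩
      have := h2tr _ _ _ hstep
      have he1 : eN.symm M = ⟨M.1, hMN⟩ := Subtype.ext rfl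
      have he2 : eN.symm M' = ⟨M'.1, hM'N⟩ := Subtype.ext rfl
      show (X.mixrevSTS bar).tr (ψ₂ (eN.symm M)) γ (ψ₂ (eN.symm M'))
      rw [he1, he2]
      exact this
  · -- isomorphism with CRG of the restricted net
    obtain ⟨ψ₃, h3i, h3T, h3tr⟩ := h3
    have hRT : (N.restrict X.T).T = N.T ∩ X.T := rfl
    have hpre_eq : ∀ (γ : Multiset A), (∀ b ∈ γ, b ∈ X.T) → ∀ p,
        (N'.restrict X.T).PRE γ p = (N.restrict X.T).PRE γ p :=
      fun γ hγ p => PTNet.PRE_eq_of _ _ fun b hb => (hforward b (hγ b hb)).1 p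
    have hpost_eq : ∀ (γ : Multiset A), (∀ b ∈ γ, b ∈ X.T) → ∀ p,
        (N'.restrict X.T).POST γ p = (N.restrict X.T).POST γ p :=
      fun γ hγ p => PTNet.POST_eq_of _ _ fun b hb => (hforward b (hγ b hb)).2 p
    have hmemX : ∀ (γ : Multiset A), (∀ b ∈ γ, b ∈ (N.restrict X.T).T) →
        ∀ b ∈ γ, b ∈ X.T := by
      intro γ h b hb
      exact Finset.mem_of_mem_inter_right (h b hb)
    have henR : ∀ (M : Fin n → ℕ) (γ : Multiset A),
        (N.restrict X.T).Enabled M γ ↔ (N'.restrict X.T).Enabled M γ := by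
      intro M γ
      constructor
      · rintro ⟨hmem, hpre⟩
        exact ⟨hmem, fun p => (hpre_eq γ (hmemX γ hmem) p) ▸ hpre p⟩
      · rintro ⟨hmem, hpre⟩
        refine ⟨hmem, fun p => ?_⟩
        rw [← hpre_eq γ (hmemX γ hmem) p]
        exact hpre p
    have hfireR : ∀ (M : Fin n → ℕ) (γ : Multiset A),
        (∀ b ∈ γ, b ∈ X.T) →
        (N'.restrict X.T).fire M γ = (N.restrict X.T).fire M γ := by
      intro M γ hγ
      funext p
      simp only [PTNet.fire, hpre_eq γ hγ p, hpost_eq γ hγ p]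
    have hreR : ∀ M, (N.restrict X.T).Reach M ↔ (N'.restrict X.T).Reach M := by
      intro M
      constructor
      · intro h
        induction h with
        | init => exact PTNet.Reach.init
        | @step M γ h hen ih =>
          have hen' := (henR M γ).1 hen
          have := ih.step hen'
          rwa [hfireR M γ (hmemX γ hen.1)] at this
      · intro h
        induction h with
        | init => exact PTNet.Reach.init
        | @step M γ h hen ih =>
          have henN := (henR M γ).2 hen
          have := ih.step henN
          rwa [← hfireR M γ (hmemX γ henN.1)] at this
    let eR : {M : Fin n → ℕ // (N.restrict X.T).Reach M} ≃
        {M : Fin n → ℕ // (N'.restrict X.T).Reach M} :=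
      Equiv.subtypeEquivRight hreR
    refine ⟨ψ₃.trans eR, ?_, ?_, ?_⟩
    · apply Subtype.ext
      show (ψ₃ X.init).1 = (N'.restrict X.T).M0
      exact congrArg Subtype.val h3i
    · exact h3T
    · intro s α s'
      rw [h3tr s α s']
      constructor
      · rintro ⟨hen, hf⟩
        refine ⟨(henR _ _).1 hen, ?_⟩
        show (ψ₃ s').1 = (N'.restrict X.T).fire (ψ₃ s).1 α
        rw [hfireR _ _ (hmemX α hen.1)]
        exact hf
      · rintro ⟨hen, hf⟩
        have henN := (henR _ _).2 hen
        refine ⟨henN, ?_⟩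
        show (ψ₃ s').1 = (N.restrict X.T).fire (ψ₃ s).1 α
        rw [← hfireR _ _ (hmemX α henN.1)]
        exact hf
  · -- the inequalities
    intro a ha p
    constructor
    · show post' a p ≤ pre' p (bar a)
      rw [(hforward a ha).2 p, hbarpre a ha p]
      exact le_sup_right
    · show pre' p a ≤ post' (bar a) p
      rw [(hforward a ha).1 p, hbarpost a ha p]
      exact le_sup_right
end
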